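/- arXiv:1801.03742 — 3 statements merged into one kernel-verified Lean document; each statement's English description precedes it below -/
import Mathlib

section
/- Let P be M-bounded with support containing more than k points, and let c* ∈ 𝓜 be an optimal codebook. Then for every j = 1,...,k, P(V_j(c*)) · c*_j = ∫_{V_j(c*)} x dP(x) (the centroid condition). As a consequence, for every codebook c ∈ H^k, R(c) − R(c*) ≤ ‖c − c*‖², where ‖c − c*‖² = ∑_{j=1}^k ‖c_j − c*_j‖². -/
open MeasureTheory Metric
open scoped Classical ENNReal NNReal BigOperators RealInnerProductSpace

noncomputable section

namespace Kmeans


variable {H : Type*} [NormedAddCommGroup H] [InnerProductSpace ℝ H]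
  [MeasurableSpace H]

/-- Distortion of a codebook `c` with respect to the measure `P`. -/
def distortion (P : Measure H) (k : ℕ) (c : Fin k → H) : ℝ :=
  ∫ x, (⨅ j : Fin k, ‖x - c j‖ ^ 2) ∂P

/-- The `j`-th closed Voronoi cell of the codebook `c`. -/
def voronoi (k : ℕ) (c : Fin k → H) (j : Fin k) : Set H :=
  {x : H | ∀ i : Fin k, ‖x - c j‖ ≤ ‖x - c i‖}

/-- The set `𝓜` of optimal codebooks, i.e. minimizers of the distortion. -/
def optimal (P : Measure H) (k : ℕ) : Set (Fin k → H) :=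
  {c | ∀ c' : Fin k → H, distortion P k c ≤ distortion P k c'}

/-- `B`: minimal separation between two codepoints of an optimal codebook. -/
def Bsep (P : Measure H) (k : ℕ) : ℝ :=
  sInf {r : ℝ | ∃ c ∈ optimal P k, ∃ i j : Fin k, i ≠ j ∧ r = ‖c i - c j‖}

/-- `p_min`: minimal mass of a Voronoi cell of an optimal codebook. -/
def pmin (P : Measure H) (k : ℕ) : ℝ :=
  sInf {r : ℝ | ∃ c ∈ optimal P k, ∃ j : Fin k, r = (P (voronoi k c j)).toReal}

/-- `N(c)`: the skeleton of the Voronoi diagram of `c`. -/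
def Ncrit (k : ℕ) (c : Fin k → H) : Set H :=
  ⋃ (i : Fin k) (j : Fin k) (_ : i ≠ j), {x : H | ‖x - c i‖ = ‖x - c j‖}

/-- `p(t)`: maximal mass of the `t`-neighborhood of the skeleton of an optimal codebook. -/
def pweight (P : Measure H) (k : ℕ) (t : ℝ) : ℝ :=
  sSup {r : ℝ | ∃ c ∈ optimal P k, r = (P {x : H | infDist x (Ncrit k c) ≤ t}).toReal}

/-- `P` is `M`-bounded: its support is contained in the closed ball of radius `M`. -/
def MBounded (P : Measure H) (M : ℝ) : Prop :=
  P (closedBall (0 : H) M) = 1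

/-- The support of `P` contains more than `k` points. -/
def SupportMoreThan (P : Measure H) (k : ℕ) : Prop :=
  ∃ S : Finset H, k < S.card ∧ ∀ x ∈ S, ∀ ε : ℝ, 0 < ε → 0 < P (ball x ε)

/-- The margin condition with radius `r₀`. -/
def MarginCondition (P : Measure H) (k : ℕ) (M r₀ : ℝ) : Prop :=
  0 < r₀ ∧ MBounded P M ∧
    ∀ t : ℝ, 0 ≤ t → t ≤ r₀ →
      pweight P k t ≤ Bsep P k * pmin P k * t / (128 * M ^ 2)

/-- The cells `W_j(c)` forming a partition subordinated to the Voronoi diagram. -/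
def Wcell (k : ℕ) (c : Fin k → H) (j : Fin k) : Set H :=
  voronoi k c j \ ⋃ (i : Fin k) (_ : i < j), voronoi k c i

/-- `𝓜‾`: codebooks satisfying the centroid condition (stationary points). -/
def stationary (P : Measure H) (k : ℕ) : Set (Fin k → H) :=
  {c | ∀ i : Fin k, (P (Wcell k c i)).toReal • c i = ∫ x in Wcell k c i, x ∂P}

/-- `P` is `ε`-separated. -/
def Separated (P : Measure H) (k : ℕ) (ε : ℝ) : Prop :=
  ∀ c ∈ stationary P k \ optimal P k, ∀ cs ∈ optimal P k,
    ε ≤ distortion P k c - distortion P k cs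

/-- Euclidean distance between codebooks. -/
def cbDist (k : ℕ) (c c' : Fin k → H) : ℝ :=
  Real.sqrt (∑ j : Fin k, ‖c j - c' j‖ ^ 2)

/-- The empirical measure of a sample. -/
def empMeasure {n : ℕ} (X : Fin n → H) : Measure H :=
  ((n : ℝ≥0∞))⁻¹ • ∑ i : Fin n, Measure.dirac (X i)

/-- Number of optimal codebooks up to relabeling of codepoints. -/
def MbarCard (P : Measure H) (k : ℕ) : ℕ :=
  Set.ncard {s : Set (Fin k → H) |
    ∃ c ∈ optimal P k, s = {c' | ∃ π : Equiv.Perm (Fin k), c' = c ∘ π}}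

/-- The mass `p_{ij}(c,t)` of a slab along the segment `[c_i, c_j]` intersected with `V_j(c)`. -/
def pij (P : Measure H) (k : ℕ) (c : Fin k → H) (i j : Fin k) (t : ℝ) : ℝ :=
  (P ({x : H |
      0 ≤ ⟪x - (2⁻¹ : ℝ) • (c i + c j), ‖c i - c j‖⁻¹ • (c j - c i)⟫ ∧
      ⟪x - (2⁻¹ : ℝ) • (c i + c j), ‖c i - c j‖⁻¹ • (c j - c i)⟫ ≤ t} ∩
    voronoi k c j)).toReal

/-- The classification risk between two (ordered) partitions. -/
def classifRisk (P : Measure H) (k : ℕ) (C C' : Fin k → Set H) : ℝ :=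
  sInf {r : ℝ | ∃ π : Equiv.Perm (Fin k),
    r = (P (⋃ j : Fin k, C (π j) ∩ (C' j)ᶜ)).toReal}

/-- A sample is `f`-clusterable. -/
def Clusterable {n : ℕ} (X : Fin n → H) (k : ℕ) (f : ℝ) : Prop :=
  ∃ c ∈ optimal (empMeasure X) k, ∀ i j : Fin k, i ≠ j →
    f * Real.sqrt (distortion (empMeasure X) k c) *
      (1 / Real.sqrt ((Finset.univ.filter fun a => X a ∈ voronoi k c i).card) +
       1 / Real.sqrt ((Finset.univ.filter fun a => X a ∈ voronoi k c j).card))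
      ≤ ‖c i - c j‖

/-- Membership in the class `𝓓(B₋, r₀₋, p₋, ε₋)` of distributions. -/
def inClassD (P : Measure H) (k : ℕ) (M Bm rm pm em : ℝ) : Prop :=
  IsProbabilityMeasure P ∧ SupportMoreThan P k ∧
    (∃ r₀ : ℝ, rm ≤ r₀ ∧ MarginCondition P k M r₀) ∧
    Bm ≤ Bsep P k ∧ pm ≤ pmin P k ∧ Separated P k em

end Kmeans

open Kmeans

variable {H : Type*} [NormedAddCommGroup H] [InnerProductSpace ℝ H]
  [MeasurableSpace H] [BorelSpace H] [SecondCountableTopology H] [CompleteSpace H]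


section AuxKmeansProof

variable (P : Measure H) [IsProbabilityMeasure P]

lemma voronoi_isClosed (k : ℕ) (c : Fin k → H) (j : Fin k) :
    IsClosed (voronoi k c j) := by
  have h : voronoi k c j = ⋂ i, {x : H | ‖x - c j‖ ≤ ‖x - c i‖} := by
    ext x; simp [voronoi, Set.mem_iInter]
  rw [h]
  exact isClosed_iInter fun i =>
    isClosed_le ((continuous_id.sub continuous_const).norm)
      ((continuous_id.sub continuous_const).norm)

lemma voronoi_measurableSet (k : ℕ) (c : Fin k → H) (j : Fin k) :
    MeasurableSet (voronoi k c j) :=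
  (voronoi_isClosed k c j).measurableSet

lemma wcell_measurableSet (k : ℕ) (c : Fin k → H) (j : Fin k) :
    MeasurableSet (Wcell k c j) :=
  (voronoi_measurableSet k c j).diff
    (MeasurableSet.iUnion fun i => MeasurableSet.iUnion fun _ => voronoi_measurableSet k c i)

lemma bdd_sq (k : ℕ) (c : Fin k → H) (x : H) :
    BddBelow (Set.range fun i : Fin k => ‖x - c i‖ ^ 2) := by
  refine ⟨0, ?_⟩
  rintro r ⟨i, rfl⟩
  positivity

lemma iInf_le_sq (k : ℕ) (c : Fin k → H) (x : H) (j : Fin k) :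
    (⨅ i : Fin k, ‖x - c i‖ ^ 2) ≤ ‖x - c j‖ ^ 2 :=
  ciInf_le (bdd_sq k c x) j

lemma iInf_eq_of_mem_voronoi {k : ℕ} (hk : 1 ≤ k) (c : Fin k → H) {x : H} {j : Fin k}
    (hx : x ∈ voronoi k c j) :
    (⨅ i : Fin k, ‖x - c i‖ ^ 2) = ‖x - c j‖ ^ 2 := by
  have : Nonempty (Fin k) := ⟨⟨0, hk⟩⟩
  refine le_antisymm (iInf_le_sq k c x j) (le_ciInf fun i => ?_)
  exact pow_le_pow_left₀ (norm_nonneg _) (hx i) 2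

lemma exists_mem_voronoi {k : ℕ} (hk : 1 ≤ k) (c : Fin k → H) (x : H) :
    ∃ j : Fin k, x ∈ voronoi k c j := by
  have : Nonempty (Fin k) := ⟨⟨0, hk⟩⟩
  obtain ⟨j, hj⟩ := Finite.exists_min fun i : Fin k => ‖x - c i‖
  exact ⟨j, hj⟩

lemma mem_wcell_iff {k : ℕ} (c : Fin k → H) (x : H) (j : Fin k) :
    x ∈ Wcell k c j ↔ x ∈ voronoi k c j ∧ ∀ i : Fin k, i < j → x ∉ voronoi k c i := by
  simp [Wcell]

lemma existsUnique_wcell {k : ℕ} (hk : 1 ≤ k) (c : Fin k → H) (x : H) :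
    ∃! j : Fin k, x ∈ Wcell k c j := by
  obtain ⟨j0, hj0⟩ := exists_mem_voronoi hk c x
  set T : Finset (Fin k) := Finset.univ.filter fun i => x ∈ voronoi k c i with hT
  have hTne : T.Nonempty := ⟨j0, by simp [hT, hj0]⟩
  have hmem : x ∈ voronoi k c (T.min' hTne) := by
    have := T.min'_mem hTne
    simp only [hT, Finset.mem_filter, Finset.mem_univ, true_and] at this
    exact this
  refine ⟨T.min' hTne, ?_, ?_⟩
  · show x ∈ Wcell k c (T.min' hTne)
    rw [mem_wcell_iff]
    refine ⟨hmem, fun i hi hxi => ?_⟩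
    have : T.min' hTne ≤ i := T.min'_le i (by simp [hT, hxi])
    exact absurd hi (not_lt.mpr this)
  · intro j hj
    have hj : x ∈ Wcell k c j := hj
    rw [mem_wcell_iff] at hj
    have h1 : T.min' hTne ≤ j := T.min'_le j (by simp [hT, hj.1])
    rcases h1.lt_or_eq with h | h
    · exact absurd hmem (hj.2 _ h)
    · exact h.symm

lemma ae_norm_le {M : ℝ} (hbdd : MBounded P M) : ∀ᵐ x ∂P, ‖x‖ ≤ M := by
  have h0 : P (closedBall (0 : H) M)ᶜ = 0 := by
    rw [measure_compl measurableSet_closedBall (measure_ne_top _ _), hbdd, measure_univ,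
      tsub_self]
  rw [ae_iff]
  refine measure_mono_null (fun x hx => ?_) h0
  simp only [Set.mem_setOf_eq] at hx
  simpa [mem_closedBall, dist_zero_right] using hx

lemma integrable_sq_dist {M : ℝ} (hbdd : MBounded P M) (a : H) :
    Integrable (fun x : H => ‖x - a‖ ^ 2) P := by
  refine Integrable.mono' (integrable_const ((M + ‖a‖) ^ 2)) ?_ ?_
  · exact ((continuous_id.sub continuous_const).norm.pow 2).aestronglyMeasurable
  · filter_upwards [ae_norm_le P hbdd] with x hx
    have h1 : ‖x - a‖ ≤ M + ‖a‖ := (norm_sub_le x a).trans (by linarith)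
    rw [Real.norm_eq_abs, abs_of_nonneg (by positivity)]
    exact pow_le_pow_left₀ (norm_nonneg _) h1 2

lemma integrable_iInf_sq {M : ℝ} (hbdd : MBounded P M) {k : ℕ} (hk : 1 ≤ k)
    (c : Fin k → H) :
    Integrable (fun x : H => ⨅ i : Fin k, ‖x - c i‖ ^ 2) P := by
  have : Nonempty (Fin k) := ⟨⟨0, hk⟩⟩
  refine Integrable.mono' (integrable_sq_dist P hbdd (c ⟨0, hk⟩)) ?_ ?_
  · refine (Measurable.iInf fun i => ?_).aestronglyMeasurable
    exact ((measurable_id.sub measurable_const).norm.pow measurable_const)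
  · refine Filter.Eventually.of_forall fun x => ?_
    rw [Real.norm_eq_abs, abs_of_nonneg (le_ciInf fun i => by positivity)]
    exact iInf_le_sq k c x ⟨0, hk⟩

lemma integrable_id_sub {M : ℝ} (hbdd : MBounded P M) (a : H) :
    Integrable (fun x : H => x - a) P := by
  refine Integrable.mono' (integrable_const (M + ‖a‖)) ?_ ?_
  · exact (continuous_id.sub continuous_const).aestronglyMeasurable
  · filter_upwards [ae_norm_le P hbdd] with x hx
    exact (norm_sub_le x a).trans (by linarith)

lemma setIntegral_sq_expand {M : ℝ} (hbdd : MBounded P M) (S : Set H)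
    (hSm : MeasurableSet S) (a b : H) :
    ∫ x in S, ‖x - b‖ ^ 2 ∂P
      = ∫ x in S, ‖x - a‖ ^ 2 ∂P - 2 * ⟪b - a, ∫ x in S, (x - a) ∂P⟫
        + (P S).toReal * ‖b - a‖ ^ 2 := by
  have hpt : ∀ x : H, ‖x - b‖ ^ 2
      = ‖x - a‖ ^ 2 - 2 * ⟪b - a, x - a⟫ + ‖b - a‖ ^ 2 := by
    intro x
    have h1 : x - b = (x - a) - (b - a) := by abel
    rw [h1, norm_sub_sq_real, real_inner_comm]
  have hida : Integrable (fun x : H => x - a) (P.restrict S) :=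
    (integrable_id_sub P hbdd a).restrict
  have hi1 : Integrable (fun x : H => ‖x - a‖ ^ 2) (P.restrict S) :=
    (integrable_sq_dist P hbdd a).restrict
  have hi2 : Integrable (fun x : H => (⟪b - a, x - a⟫ : ℝ)) (P.restrict S) :=
    hida.const_inner (b - a)
  have hi2m : Integrable (fun x : H => 2 * (⟪b - a, x - a⟫ : ℝ)) (P.restrict S) :=
    hi2.const_mul 2
  have hiA : Integrable (fun x : H => ‖x - a‖ ^ 2 - 2 * (⟪b - a, x - a⟫ : ℝ))
      (P.restrict S) := hi1.sub hi2m
  rw [show (fun x : H => ‖x - b‖ ^ 2) = fun x : H =>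
      (‖x - a‖ ^ 2 - 2 * ⟪b - a, x - a⟫ + ‖b - a‖ ^ 2) from funext hpt]
  rw [integral_add hiA (integrable_const _),
    integral_sub hi1 hi2m, setIntegral_const, measureReal_def, smul_eq_mul,
    integral_const_mul, integral_inner hida]

lemma centroid_zero {M : ℝ} (hM : 0 < M) (hbdd : MBounded P M) {k : ℕ} (hk : 1 ≤ k)
    {cs : Fin k → H} (hcs : cs ∈ optimal P k) (j : Fin k) (S : Set H)
    (hSm : MeasurableSet S)
    (hS1 : ∀ x ∈ S, (⨅ i : Fin k, ‖x - cs i‖ ^ 2) = ‖x - cs j‖ ^ 2)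
    (hS2 : ∀ x ∉ S, ∃ i : Fin k, i ≠ j ∧
      (⨅ i' : Fin k, ‖x - cs i'‖ ^ 2) = ‖x - cs i‖ ^ 2) :
    ∫ x in S, (x - cs j) ∂P = 0 := by
  have : Nonempty (Fin k) := ⟨⟨0, hk⟩⟩
  set m : H := ∫ x in S, (x - cs j) ∂P with hm
  by_contra hm0
  have hmpos : 0 < ‖m‖ ^ 2 := pow_pos (norm_pos_iff.mpr hm0) 2
  set p : ℝ := (P S).toReal with hp
  have hp0 : 0 ≤ p := ENNReal.toReal_nonneg
  set t : ℝ := 1 / (p + 1) with ht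
  have ht0 : 0 < t := by positivity
  have htp : t * p ≤ 1 := by
    rw [ht, one_div, inv_mul_le_iff₀ (by positivity)]
    linarith
  set b : H := cs j + t • m with hb
  set ct : Fin k → H := Function.update cs j b with hct
  have hpt : ∀ x : H, (⨅ i : Fin k, ‖x - ct i‖ ^ 2)
      ≤ S.indicator (fun x => ‖x - b‖ ^ 2) x
        + Sᶜ.indicator (fun x => ⨅ i : Fin k, ‖x - cs i‖ ^ 2) x := by
    intro x
    by_cases hx : x ∈ S
    · rw [Set.indicator_of_mem hx, Set.indicator_of_notMem (by simp [hx]), add_zero]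
      have h := iInf_le_sq k ct x j
      rwa [hct, Function.update_self] at h
    · rw [Set.indicator_of_notMem hx, Set.indicator_of_mem (by simp [hx]), zero_add]
      obtain ⟨i, hij, hi⟩ := hS2 x hx
      have h1 := iInf_le_sq k ct x i
      rw [hct, Function.update_of_ne hij] at h1
      rw [hi]
      exact h1
  have hint_ct := integrable_iInf_sq P hbdd hk ct
  have hint_cs := integrable_iInf_sq P hbdd hk cs
  have hint_b := integrable_sq_dist P hbdd b
  have hkey : distortion P k ct ≤ (∫ x in S, ‖x - b‖ ^ 2 ∂P)
      + ∫ x in Sᶜ, (⨅ i : Fin k, ‖x - cs i‖ ^ 2) ∂P := by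
    rw [distortion, ← integral_indicator hSm, ← integral_indicator hSm.compl,
      ← integral_add (hint_b.indicator hSm) (hint_cs.indicator hSm.compl)]
    exact integral_mono hint_ct
      ((hint_b.indicator hSm).add (hint_cs.indicator hSm.compl)) hpt
  have hexp := setIntegral_sq_expand P hbdd S hSm (cs j) b
  have hba : b - cs j = t • m := by rw [hb]; abel
  rw [hba, ← hm, ← hp] at hexp
  have hinner : (⟪t • m, m⟫ : ℝ) = t * ‖m‖ ^ 2 := by
    rw [real_inner_smul_left, real_inner_self_eq_norm_sq]
  have hnorm : ‖t • m‖ ^ 2 = t ^ 2 * ‖m‖ ^ 2 := by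
    rw [norm_smul, mul_pow, Real.norm_eq_abs, sq_abs]
  rw [hinner, hnorm] at hexp
  have hSval : ∫ x in S, ‖x - cs j‖ ^ 2 ∂P
      = ∫ x in S, (⨅ i : Fin k, ‖x - cs i‖ ^ 2) ∂P :=
    (setIntegral_congr_fun hSm fun x hx => hS1 x hx).symm
  have hsplit : (∫ x in S, (⨅ i : Fin k, ‖x - cs i‖ ^ 2) ∂P)
      + ∫ x in Sᶜ, (⨅ i : Fin k, ‖x - cs i‖ ^ 2) ∂P = distortion P k cs := by
    rw [distortion]
    exact integral_add_compl hSm hint_cs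
  have hopt : distortion P k cs ≤ distortion P k ct := hcs ct
  have hprod : (t * p) * (t * ‖m‖ ^ 2) ≤ 1 * (t * ‖m‖ ^ 2) :=
    mul_le_mul_of_nonneg_right htp (by positivity)
  nlinarith [hopt, hkey, hexp, hSval, hsplit, hprod, mul_pos ht0 hmpos]

end AuxKmeansProof

/-- the centroid condition for optimal codebooks, and the resulting
quadratic upper bound on the excess distortion. -/
theorem centroid_condition_and_excess_distortion_le_sq_dist
    (P : Measure H) [IsProbabilityMeasure P] (k : ℕ) (M : ℝ)
    (hk : 1 ≤ k) (hM : 0 < M) (hbdd : MBounded P M) (hsupp : SupportMoreThan P k)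
    (cs : Fin k → H) (hcs : cs ∈ optimal P k) :
    (∀ j : Fin k, (P (voronoi k cs j)).toReal • cs j = ∫ x in voronoi k cs j, x ∂P) ∧
    ∀ c : Fin k → H,
      distortion P k c - distortion P k cs ≤ ∑ j : Fin k, ‖c j - cs j‖ ^ 2 := by
  have h0 : ∀ (j : Fin k) (S : Set H), MeasurableSet S →
      (∀ x ∈ S, (⨅ i : Fin k, ‖x - cs i‖ ^ 2) = ‖x - cs j‖ ^ 2) →
      (∀ x ∉ S, ∃ i : Fin k, i ≠ j ∧
        (⨅ i' : Fin k, ‖x - cs i'‖ ^ 2) = ‖x - cs i‖ ^ 2) →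
      ∫ x in S, (x - cs j) ∂P = 0 :=
    fun j S hSm hS1 hS2 => centroid_zero P hM hbdd hk hcs j S hSm hS1 hS2
  constructor
  · intro j
    have hS2 : ∀ x ∉ voronoi k cs j, ∃ i : Fin k, i ≠ j ∧
        (⨅ i' : Fin k, ‖x - cs i'‖ ^ 2) = ‖x - cs i‖ ^ 2 := by
      intro x hx
      obtain ⟨i, hi⟩ := exists_mem_voronoi hk cs x
      refine ⟨i, ?_, iInf_eq_of_mem_voronoi hk cs hi⟩
      rintro rfl
      exact hx hi
    have hz := h0 j (voronoi k cs j) (voronoi_measurableSet k cs j)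
      (fun x hx => iInf_eq_of_mem_voronoi hk cs hx) hS2
    have hi1 : Integrable (fun x : H => x - cs j) (P.restrict (voronoi k cs j)) :=
      (integrable_id_sub P hbdd (cs j)).restrict
    have hrw : ∫ x in voronoi k cs j, x ∂P
        = ∫ x in voronoi k cs j, ((x - cs j) + cs j) ∂P := by simp
    rw [hrw, integral_add hi1 (integrable_const _), hz, zero_add, setIntegral_const, measureReal_def]
  · intro c
    have hWm : ∀ j : Fin k, MeasurableSet (Wcell k cs j) := wcell_measurableSet k cs
    have hWV : ∀ j : Fin k, Wcell k cs j ⊆ voronoi k cs j := fun j => Set.diff_subset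
    have huniq := existsUnique_wcell hk cs
    have hm0 : ∀ j : Fin k, ∫ x in Wcell k cs j, (x - cs j) ∂P = 0 := by
      intro j
      refine h0 j (Wcell k cs j) (hWm j)
        (fun x hx => iInf_eq_of_mem_voronoi hk cs (hWV j hx)) ?_
      intro x hx
      obtain ⟨j0, hj0, huj⟩ := huniq x
      refine ⟨j0, ?_, iInf_eq_of_mem_voronoi hk cs (hWV j0 hj0)⟩
      rintro rfl
      exact hx hj0
    have hsum_eq : ∀ d : Fin k → H, ∀ x : H,
        (∑ j : Fin k, (Wcell k cs j).indicator (fun y => ‖y - d j‖ ^ 2) x)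
          = ‖x - d (Classical.choose (huniq x))‖ ^ 2 := by
      intro d x
      obtain ⟨hj0, huj⟩ := Classical.choose_spec (huniq x)
      rw [Finset.sum_eq_single (Classical.choose (huniq x))]
      · rw [Set.indicator_of_mem hj0]
      · intro i _ hi
        rw [Set.indicator_of_notMem]
        intro hxi
        exact hi (huj i hxi)
      · intro h
        exact absurd (Finset.mem_univ _) h
    have hint_ind : ∀ d : Fin k → H, ∀ j : Fin k,
        Integrable ((Wcell k cs j).indicator (fun y : H => ‖y - d j‖ ^ 2)) P :=
      fun d j => (integrable_sq_dist P hbdd (d j)).indicator (hWm j)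
    have hcs_eq : distortion P k cs
        = ∑ j : Fin k, ∫ x in Wcell k cs j, ‖x - cs j‖ ^ 2 ∂P := by
      have hptcs : ∀ x : H, (⨅ i : Fin k, ‖x - cs i‖ ^ 2)
          = ∑ j : Fin k, (Wcell k cs j).indicator (fun y => ‖y - cs j‖ ^ 2) x := by
        intro x
        obtain ⟨hj0, huj⟩ := Classical.choose_spec (huniq x)
        rw [hsum_eq cs x]
        exact iInf_eq_of_mem_voronoi hk cs (hWV _ hj0)
      calc distortion P k cs
          = ∫ x, (∑ j : Fin k,
              (Wcell k cs j).indicator (fun y => ‖y - cs j‖ ^ 2) x) ∂P := by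
            rw [distortion]; simp_rw [hptcs]
        _ = ∑ j : Fin k, ∫ x,
              (Wcell k cs j).indicator (fun y => ‖y - cs j‖ ^ 2) x ∂P :=
            integral_finset_sum _ fun j _ => hint_ind cs j
        _ = ∑ j : Fin k, ∫ x in Wcell k cs j, ‖x - cs j‖ ^ 2 ∂P :=
            Finset.sum_congr rfl fun j _ => integral_indicator (hWm j)
    have hc_le : distortion P k c
        ≤ ∑ j : Fin k, ∫ x in Wcell k cs j, ‖x - c j‖ ^ 2 ∂P := by
      have hpt : ∀ x : H, (⨅ i : Fin k, ‖x - c i‖ ^ 2)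
          ≤ ∑ j : Fin k, (Wcell k cs j).indicator (fun y => ‖y - c j‖ ^ 2) x := by
        intro x
        rw [hsum_eq c x]
        exact iInf_le_sq k c x _
      calc distortion P k c
          ≤ ∫ x, (∑ j : Fin k,
              (Wcell k cs j).indicator (fun y => ‖y - c j‖ ^ 2) x) ∂P := by
            rw [distortion]
            exact integral_mono (integrable_iInf_sq P hbdd hk c)
              (integrable_finset_sum _ fun j _ => hint_ind c j) hpt
        _ = ∑ j : Fin k, ∫ x,
              (Wcell k cs j).indicator (fun y => ‖y - c j‖ ^ 2) x ∂P :=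
            integral_finset_sum _ fun j _ => hint_ind c j
        _ = ∑ j : Fin k, ∫ x in Wcell k cs j, ‖x - c j‖ ^ 2 ∂P :=
            Finset.sum_congr rfl fun j _ => integral_indicator (hWm j)
    have hjle : ∀ j : Fin k, ∫ x in Wcell k cs j, ‖x - c j‖ ^ 2 ∂P
        ≤ (∫ x in Wcell k cs j, ‖x - cs j‖ ^ 2 ∂P) + ‖c j - cs j‖ ^ 2 := by
      intro j
      have hexp := setIntegral_sq_expand P hbdd (Wcell k cs j) (hWm j) (cs j) (c j)
      rw [hm0 j] at hexp
      simp only [inner_zero_right, mul_zero, sub_zero] at hexp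
      have hp1 : (P (Wcell k cs j)).toReal ≤ 1 := by
        have h := ENNReal.toReal_mono ENNReal.one_ne_top (prob_le_one (μ := P) (s := Wcell k cs j))
        simpa using h
      have hn : (0:ℝ) ≤ ‖c j - cs j‖ ^ 2 := by positivity
      rw [hexp]
      have := mul_le_of_le_one_left hn hp1
      linarith
    have hsum_le : (∑ j : Fin k, ∫ x in Wcell k cs j, ‖x - c j‖ ^ 2 ∂P)
        ≤ (∑ j : Fin k, ∫ x in Wcell k cs j, ‖x - cs j‖ ^ 2 ∂P)
          + ∑ j : Fin k, ‖c j - cs j‖ ^ 2 := by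
      rw [← Finset.sum_add_distrib]
      exact Finset.sum_le_sum fun j _ => hjle j
    rw [hcs_eq]
    linarith [hc_le, hsum_le]
end
end

section
/- Suppose P is M-bounded with support containing more than k points and c* ∈ 𝓜 is an optimal codebook. Then for all i ≠ j and all 0 ≤ t < 1/2, writing r_{ij} = ‖c*_i − c*_j‖ and p_ℓ = P(V_ℓ(c*)): ∫_0^{t·r_{ij}} p_{ij}(c*,s) ds ≤ 2 t² r_{ij} · min( p_i/(1−2t), p_j/(1+2t) ), and also ∫_0^{t·r_{ij}} p_{ij}(c*,s) ds ≤ t² r_{ij} (p_i + p_j)/2. -/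
open MeasureTheory Metric
open scoped Classical ENNReal NNReal BigOperators RealInnerProductSpace

noncomputable section

open Kmeans

variable {H : Type*} [NormedAddCommGroup H] [InnerProductSpace ℝ H]
  [MeasurableSpace H] [BorelSpace H] [SecondCountableTopology H] [CompleteSpace H]

/-! Let `r = ‖c i - c j‖` and let `s` be the signed distance to the bisector of `c i` and `c j`,
positive on the side of `c j`. By the layer-cake formula the left-hand side is
`J = ∫_{V_j} (t r - s)⁺ dP`. Move `c i` by `a` and `c j` by `b` along `c j - c i`, where
`a + b = 2 t r`, and let the points of `V_j` with `s < t r` go to the moved `c i`. Since an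
optimal codebook satisfies the centroid condition, the distortion changes by at most
`a² p_i + b² p_j - 2 (r - a + b) J`, which optimality forces to be nonnegative. The choices
`(a, b) = (2 t r, 0)`, `(0, 2 t r)` and `(t r, t r)` give the three bounds. -/

namespace Kmeans

section Geometry

variable {E : Type*} [NormedAddCommGroup E] [InnerProductSpace ℝ E]

def unitDir (p q : E) : E := ‖p - q‖⁻¹ • (q - p)

def bisectorCoord (p q x : E) : ℝ := ⟪x - (2⁻¹ : ℝ) • (p + q), unitDir p q⟫

lemma continuous_bisectorCoord (p q : E) : Continuous (bisectorCoord p q) := by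
  unfold bisectorCoord
  fun_prop

lemma norm_sub_add_smul_sq (x c u : E) (a : ℝ) :
    ‖x - (c + a • u)‖ ^ 2 =
      ‖x - c‖ ^ 2 - 2 * a * ⟪x - c, u⟫ + a ^ 2 * ‖u‖ ^ 2 := by
  rw [← sub_sub, norm_sub_sq_real, real_inner_smul_right, norm_smul, Real.norm_eq_abs, mul_pow,
    sq_abs]
  ring

variable {p q : E}

lemma norm_unitDir (h : p ≠ q) : ‖unitDir p q‖ = 1 := by
  rw [unitDir, norm_smul, norm_inv, norm_norm, norm_sub_rev q]
  exact inv_mul_cancel₀ (norm_ne_zero_iff.2 (sub_ne_zero.2 h))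

lemma sub_eq_norm_smul_unitDir (h : p ≠ q) : q - p = ‖p - q‖ • unitDir p q := by
  rw [unitDir, smul_smul, mul_inv_cancel₀ (norm_ne_zero_iff.2 (sub_ne_zero.2 h)), one_smul]

lemma inner_sub_left_unitDir (h : p ≠ q) (x : E) :
    ⟪x - p, unitDir p q⟫ = bisectorCoord p q x + ‖p - q‖ / 2 := by
  have hx : x - p = (x - (2⁻¹ : ℝ) • (p + q)) + (2⁻¹ * ‖p - q‖) • unitDir p q := by
    rw [mul_smul, ← sub_eq_norm_smul_unitDir h]
    module
  rw [hx, inner_add_left, real_inner_smul_left, real_inner_self_eq_norm_sq, norm_unitDir h,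
    bisectorCoord]
  ring

lemma inner_sub_right_unitDir (h : p ≠ q) (x : E) :
    ⟪x - q, unitDir p q⟫ = bisectorCoord p q x - ‖p - q‖ / 2 := by
  have hx : x - q = (x - (2⁻¹ : ℝ) • (p + q)) - (2⁻¹ * ‖p - q‖) • unitDir p q := by
    rw [mul_smul, ← sub_eq_norm_smul_unitDir h]
    module
  rw [hx, inner_sub_left, real_inner_smul_left, real_inner_self_eq_norm_sq, norm_unitDir h,
    bisectorCoord]
  ring

lemma norm_sub_sq_eq_add_bisectorCoord (h : p ≠ q) (x : E) :
    ‖x - p‖ ^ 2 = ‖x - q‖ ^ 2 + 2 * ‖p - q‖ * bisectorCoord p q x := by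
  have hx : x - p = (x - q) + ‖p - q‖ • unitDir p q := by
    rw [← sub_eq_norm_smul_unitDir h]
    abel
  rw [hx, norm_add_sq_real, real_inner_smul_right, inner_sub_right_unitDir h, norm_smul,
    norm_unitDir h, norm_norm]
  ring

/-- With `p` moved by `a` and `q` by `b` along `unitDir p q`, where `a + b = 2 T`, sending `x`
to the moved `p` instead of the moved `q` saves exactly
`2 (‖p - q‖ - a + b) (T - bisectorCoord p q x)`. -/
lemma min_norm_sub_add_smul_sq_le (h : p ≠ q) (x : E) {a b T : ℝ} (hT : a + b = 2 * T) :
    min (‖x - (p + a • unitDir p q)‖ ^ 2) (‖x - (q + b • unitDir p q)‖ ^ 2) ≤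
      ‖x - q‖ ^ 2 - 2 * b * ⟪x - q, unitDir p q⟫ + b ^ 2 -
        2 * (‖p - q‖ - a + b) * max (T - bisectorCoord p q x) 0 := by
  rw [norm_sub_add_smul_sq, norm_sub_add_smul_sq, norm_unitDir h, inner_sub_left_unitDir h,
    inner_sub_right_unitDir h, norm_sub_sq_eq_add_bisectorCoord h]
  rcases le_total (T - bisectorCoord p q x) 0 with hs | hs
  · rw [max_eq_right hs]
    exact (min_le_right _ _).trans_eq (by ring)
  · rw [max_eq_left hs]
    exact (min_le_left _ _).trans_eq (by linear_combination (a - b - ‖p - q‖) * hT)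

end Geometry

section Voronoi

variable {E : Type*} [NormedAddCommGroup E] {k : ℕ} {c : Fin k → E}

def quantCost (c : Fin k → E) (x : E) : ℝ := ⨅ l, ‖x - c l‖ ^ 2

lemma quantCost_le (c : Fin k → E) (x : E) (l : Fin k) : quantCost c x ≤ ‖x - c l‖ ^ 2 :=
  ciInf_le (Finite.bddBelow_range _) l

lemma quantCost_eq_of_mem_voronoi [Nonempty (Fin k)] {x : E} {l : Fin k}
    (hx : x ∈ voronoi k c l) : quantCost c x = ‖x - c l‖ ^ 2 :=
  (quantCost_le c x l).antisymm (le_ciInf fun m => pow_le_pow_left₀ (norm_nonneg _) (hx m) 2)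

lemma exists_mem_voronoi [Nonempty (Fin k)] (c : Fin k → E) (x : E) :
    ∃ l, x ∈ voronoi k c l := by
  obtain ⟨l, -, hl⟩ :=
    Finset.exists_min_image Finset.univ (fun m => ‖x - c m‖) Finset.univ_nonempty
  exact ⟨l, fun m => hl m (Finset.mem_univ m)⟩

lemma exists_ne_mem_voronoi_of_notMem [Nonempty (Fin k)] {x : E} {m : Fin k}
    (hx : x ∉ voronoi k c m) : ∃ l ≠ m, x ∈ voronoi k c l := by
  obtain ⟨l, hl⟩ := exists_mem_voronoi c x
  exact ⟨l, fun h => hx (h ▸ hl), hl⟩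

lemma isClosed_voronoi (c : Fin k → E) (l : Fin k) : IsClosed (voronoi k c l) := by
  simp only [voronoi, Set.ofPred_forall]
  exact isClosed_iInter fun m => isClosed_le (by fun_prop) (by fun_prop)

lemma measurableSet_voronoi [MeasurableSpace E] [OpensMeasurableSpace E] (c : Fin k → E)
    (l : Fin k) : MeasurableSet (voronoi k c l) :=
  (isClosed_voronoi c l).measurableSet

lemma bisectorCoord_nonneg_of_mem_voronoi [InnerProductSpace ℝ E] {i j : Fin k}
    (h : c i ≠ c j) {x : E} (hx : x ∈ voronoi k c j) : 0 ≤ bisectorCoord (c i) (c j) x := by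
  have hsq := pow_le_pow_left₀ (norm_nonneg _) (hx i) 2
  rw [norm_sub_sq_eq_add_bisectorCoord h] at hsq
  have hr : 0 < ‖c i - c j‖ := norm_pos_iff.2 (sub_ne_zero.2 h)
  nlinarith

lemma quantCost_update_update_le [InnerProductSpace ℝ E] {i j : Fin k} (hij : c i ≠ c j)
    {a b T : ℝ} (hT : a + b = 2 * T) (x : E) :
    quantCost (Function.update (Function.update c i (c i + a • unitDir (c i) (c j))) j
        (c j + b • unitDir (c i) (c j))) x ≤
      quantCost c x +
        ((voronoi k c i \ voronoi k c j).indicator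
            (fun y => -2 * a * ⟪y - c i, unitDir (c i) (c j)⟫ + a ^ 2) x +
          (voronoi k c j).indicator (fun y => -2 * b * ⟪y - c j, unitDir (c i) (c j)⟫ + b ^ 2 -
            2 * (‖c i - c j‖ - a + b) * max (T - bisectorCoord (c i) (c j) y) 0) x) := by
  have : Nonempty (Fin k) := ⟨i⟩
  have hne : i ≠ j := fun h => hij (congrArg c h)
  set c' := Function.update (Function.update c i (c i + a • unitDir (c i) (c j))) j
    (c j + b • unitDir (c i) (c j))
  have hc'i : c' i = c i + a • unitDir (c i) (c j) := by simp [c', Function.update_of_ne hne]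
  have hc'j : c' j = c j + b • unitDir (c i) (c j) := by simp [c']
  by_cases hxj : x ∈ voronoi k c j
  · rw [Set.indicator_of_notMem (fun h => h.2 hxj), Set.indicator_of_mem hxj,
      quantCost_eq_of_mem_voronoi hxj, zero_add]
    refine (le_min (quantCost_le c' x i) (quantCost_le c' x j)).trans ?_
    rw [hc'i, hc'j]
    linarith [min_norm_sub_add_smul_sq_le hij x hT]
  by_cases hxi : x ∈ voronoi k c i
  · rw [Set.indicator_of_mem (show x ∈ voronoi k c i \ voronoi k c j from ⟨hxi, hxj⟩),
      Set.indicator_of_notMem hxj, quantCost_eq_of_mem_voronoi hxi, add_zero]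
    refine (quantCost_le c' x i).trans_eq ?_
    rw [hc'i, norm_sub_add_smul_sq, norm_unitDir hij]
    ring
  obtain ⟨l, hli, hl⟩ := exists_ne_mem_voronoi_of_notMem hxi
  have hlj : l ≠ j := by rintro rfl; exact hxj hl
  rw [Set.indicator_of_notMem (fun h => hxi h.1), Set.indicator_of_notMem hxj,
    quantCost_eq_of_mem_voronoi hl, add_zero, add_zero]
  simpa [c', Function.update_of_ne hli, Function.update_of_ne hlj] using quantCost_le c' x l

end Voronoi

section Optimality

variable {E : Type*} [NormedAddCommGroup E] [MeasurableSpace E] [OpensMeasurableSpace E]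
  {P : Measure E} [IsFiniteMeasure P] {M : ℝ} {k : ℕ} {c : Fin k → E}

lemma MBounded.ae_norm_le [IsProbabilityMeasure P] (h : MBounded P M) :
    ∀ᵐ x ∂P, ‖x‖ ≤ M := by
  have : P (closedBall 0 M)ᶜ = 0 := by
    rw [measure_compl measurableSet_closedBall (measure_ne_top _ _), h, measure_univ, tsub_self]
  filter_upwards [measure_eq_zero_iff_ae_notMem.1 this] with x hx
  simpa using hx

lemma integrable_quantCost [Nonempty (Fin k)] (hP : ∀ᵐ x ∂P, ‖x‖ ≤ M) (c : Fin k → E) :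
    Integrable (quantCost c) P := by
  obtain ⟨l⟩ := ‹Nonempty (Fin k)›
  have hmeas : Measurable (quantCost c) :=
    .iInf fun m => (by fun_prop : Continuous fun x => ‖x - c m‖ ^ 2).measurable
  refine .of_bound hmeas.aestronglyMeasurable ((M + ‖c l‖) ^ 2) ?_
  filter_upwards [hP] with x hx
  have hpos : 0 ≤ quantCost c x := le_ciInf fun m => by positivity
  rw [Real.norm_eq_abs, abs_of_nonneg hpos]
  refine (quantCost_le c x l).trans (pow_le_pow_left₀ (norm_nonneg _) ?_ 2)
  linarith [norm_sub_le x (c l)]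

lemma integral_nonneg_of_optimal_of_quantCost_le [Nonempty (Fin k)] (hP : ∀ᵐ x ∂P, ‖x‖ ≤ M)
    (hc : c ∈ optimal P k) (c' : Fin k → E) {g : E → ℝ} (hg : Integrable g P)
    (hcg : ∀ x, quantCost c' x ≤ quantCost c x + g x) : 0 ≤ ∫ x, g x ∂P := by
  have hcost : ∫ x, quantCost c' x ∂P ≤ ∫ x, quantCost c x + g x ∂P :=
    integral_mono (integrable_quantCost hP c') ((integrable_quantCost hP c).add hg) hcg
  rw [integral_add (integrable_quantCost hP c) hg] at hcost
  have hopt : ∫ x, quantCost c x ∂P ≤ ∫ x, quantCost c' x ∂P := hc c'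
  linarith

variable [InnerProductSpace ℝ E]

lemma integrable_inner_sub (hP : ∀ᵐ x ∂P, ‖x‖ ≤ M) (a v : E) :
    Integrable (fun x => ⟪x - a, v⟫) P := by
  refine .of_bound (by fun_prop : Continuous _).aestronglyMeasurable ((M + ‖a‖) * ‖v‖) ?_
  filter_upwards [hP] with x hx
  rw [Real.norm_eq_abs]
  refine (abs_real_inner_le_norm _ _).trans (mul_le_mul_of_nonneg_right ?_ (norm_nonneg v))
  linarith [norm_sub_le x a]

/-- Moving `c m` to `c m + ε • v` raises the cost on `W` by `-2 ε I + ε² ‖v‖² P(W)` and does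
not raise it elsewhere, so this quadratic in `ε` is nonnegative and `I` vanishes. -/
lemma setIntegral_inner_sub_eq_zero_of_optimal [Nonempty (Fin k)]
    (hP : ∀ᵐ x ∂P, ‖x‖ ≤ M)
    (hc : c ∈ optimal P k) {m : Fin k} {W : Set E} (hW : MeasurableSet W)
    (hWm : W ⊆ voronoi k c m) (hcover : ∀ x ∉ W, ∃ l ≠ m, x ∈ voronoi k c l) (v : E) :
    ∫ x in W, ⟪x - c m, v⟫ ∂P = 0 := by
  set I := ∫ x in W, ⟪x - c m, v⟫ ∂P
  have hquad : ∀ ε : ℝ, 0 ≤ (‖v‖ ^ 2 * P.real W) * (ε * ε) + (-2 * I) * ε + 0 := by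
    intro ε
    set g : E → ℝ := fun x => -2 * ε * ⟪x - c m, v⟫ + ε ^ 2 * ‖v‖ ^ 2
    have hg : Integrable g P :=
      ((integrable_inner_sub hP (c m) v).const_mul _).add (integrable_const _)
    have hcost : ∀ x, quantCost (Function.update c m (c m + ε • v)) x ≤
        quantCost c x + W.indicator g x := by
      intro x
      by_cases hx : x ∈ W
      · rw [Set.indicator_of_mem hx, quantCost_eq_of_mem_voronoi (hWm hx)]
        refine (quantCost_le _ x m).trans_eq ?_
        rw [Function.update_self, norm_sub_add_smul_sq]
        ring
      · obtain ⟨l, hlm, hl⟩ := hcover x hx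
        rw [Set.indicator_of_notMem hx, quantCost_eq_of_mem_voronoi hl, add_zero]
        simpa [Function.update_of_ne hlm] using
          quantCost_le (Function.update c m (c m + ε • v)) x l
    have h0 := integral_nonneg_of_optimal_of_quantCost_le hP hc _ (hg.indicator hW) hcost
    rw [integral_indicator hW,
      integral_add ((integrable_inner_sub hP (c m) v).const_mul _).integrableOn
        (integrable_const _).integrableOn,
      integral_const_mul, setIntegral_const, smul_eq_mul] at h0
    linear_combination h0
  have hdisc := discrim_le_zero hquad
  rw [discrim] at hdisc
  nlinarith [sq_nonneg I]

lemma setIntegral_inner_sub_voronoi_eq_zero_of_optimal (hP : ∀ᵐ x ∂P, ‖x‖ ≤ M)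
    (hc : c ∈ optimal P k) (m : Fin k) (v : E) :
    ∫ x in voronoi k c m, ⟪x - c m, v⟫ ∂P = 0 :=
  have : Nonempty (Fin k) := ⟨m⟩
  setIntegral_inner_sub_eq_zero_of_optimal hP hc (measurableSet_voronoi c m) subset_rfl
    (fun _ hx => exists_ne_mem_voronoi_of_notMem hx) v

lemma setIntegral_inner_sub_voronoi_diff_eq_zero_of_optimal (hP : ∀ᵐ x ∂P, ‖x‖ ≤ M)
    (hc : c ∈ optimal P k) {m l : Fin k} (hml : m ≠ l) (v : E) :
    ∫ x in voronoi k c m \ voronoi k c l, ⟪x - c m, v⟫ ∂P = 0 :=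
  have : Nonempty (Fin k) := ⟨m⟩
  setIntegral_inner_sub_eq_zero_of_optimal hP hc
    ((measurableSet_voronoi c m).diff (measurableSet_voronoi c l)) Set.sdiff_subset
    (fun x hx => by
      by_cases hxl : x ∈ voronoi k c l
      · exact ⟨l, hml.symm, hxl⟩
      · exact exists_ne_mem_voronoi_of_notMem fun hxm => hx ⟨hxm, hxl⟩) v

lemma two_mul_mul_setIntegral_max_le_of_optimal (hP : ∀ᵐ x ∂P, ‖x‖ ≤ M)
    (hc : c ∈ optimal P k) {i j : Fin k} (hij : c i ≠ c j) {a b T : ℝ} (hT : a + b = 2 * T) :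
    2 * (‖c i - c j‖ - a + b) *
        ∫ x in voronoi k c j, max (T - bisectorCoord (c i) (c j) x) 0 ∂P ≤
      a ^ 2 * P.real (voronoi k c i) + b ^ 2 * P.real (voronoi k c j) := by
  have : Nonempty (Fin k) := ⟨i⟩
  set u := unitDir (c i) (c j)
  have hVi := measurableSet_voronoi c i
  have hVj := measurableSet_voronoi c j
  have hint_i := integrable_inner_sub hP (c i) u
  have hint_j := integrable_inner_sub hP (c j) u
  have hint_max : Integrable (fun x => max (T - bisectorCoord (c i) (c j) x) 0) P :=
    ((integrable_const _).sub (integrable_inner_sub hP _ _)).pos_part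
  have hint_affi : Integrable (fun x => -2 * a * ⟪x - c i, u⟫ + a ^ 2) P :=
    (hint_i.const_mul _).add (integrable_const _)
  have hint_affj : Integrable (fun x => -2 * b * ⟪x - c j, u⟫ + b ^ 2) P :=
    (hint_j.const_mul _).add (integrable_const _)
  have hgi := hint_affi.indicator (hVi.diff hVj)
  have hgj := (hint_affj.sub (hint_max.const_mul (2 * (‖c i - c j‖ - a + b)))).indicator hVj
  have h0 := integral_nonneg_of_optimal_of_quantCost_le hP hc _ (hgi.add hgj)
    (quantCost_update_update_le hij hT)
  rw [integral_add' hgi hgj, integral_indicator (hVi.diff hVj), integral_indicator hVj] at h0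
  simp only [Pi.sub_apply] at h0
  rw [integral_add (hint_i.const_mul _).integrableOn (integrable_const _).integrableOn,
    integral_sub hint_affj.integrableOn (hint_max.const_mul _).integrableOn,
    integral_add (hint_j.const_mul _).integrableOn (integrable_const _).integrableOn,
    integral_const_mul, integral_const_mul, integral_const_mul,
    setIntegral_inner_sub_voronoi_diff_eq_zero_of_optimal hP hc (fun h => hij (congrArg c h)),
    setIntegral_inner_sub_voronoi_eq_zero_of_optimal hP hc,
    setIntegral_const, setIntegral_const, smul_eq_mul, smul_eq_mul] at h0
  have hmono : P.real (voronoi k c i \ voronoi k c j) ≤ P.real (voronoi k c i) :=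
    measureReal_mono Set.sdiff_subset
  nlinarith [sq_nonneg a]

end Optimality

lemma setIntegral_max_sub_eq_intervalIntegral_measureReal {α : Type*} [MeasurableSpace α]
    {μ : Measure α} [IsFiniteMeasure μ] {V : Set α} (hV : MeasurableSet V) {f : α → ℝ}
    (hf : Measurable f) (hfV : ∀ x ∈ V, 0 ≤ f x) {T : ℝ} (hT : 0 ≤ T) :
    ∫ x in V, max (T - f x) 0 ∂μ = ∫ v in (0 : ℝ)..T, μ.real (V ∩ {x | f x ≤ v}) := by
  have hbound : ∀ᵐ x ∂μ.restrict V, max (T - f x) 0 ≤ T :=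
    (ae_restrict_iff' hV).2 (.of_forall fun x hx => max_le (by linarith [hfV x hx]) hT)
  have hint : Integrable (fun x => max (T - f x) 0) (μ.restrict V) :=
    .of_bound (by fun_prop) T (hbound.mono fun x hx => by
      rwa [Real.norm_eq_abs, abs_of_nonneg (le_max_right _ _)])
  have hreflect := intervalIntegral.integral_comp_sub_left
    (fun v => μ.real (V ∩ {x | f x ≤ v})) (a := 0) (b := T) T
  rw [sub_self, sub_zero] at hreflect
  rw [hint.integral_eq_integral_Ioc_meas_le (.of_forall fun x => le_max_right _ _) hbound,
    ← hreflect, intervalIntegral.integral_of_le hT]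
  refine setIntegral_congr_fun measurableSet_Ioc fun t ht => ?_
  rw [measureReal_restrict_apply' hV, Set.inter_comm]
  congr 2
  ext x
  simp only [Set.mem_ofPred_eq, le_max_iff, not_le.2 ht.1, or_false]
  constructor <;> intro h <;> linarith

section Slab

variable {E : Type*} [NormedAddCommGroup E] [InnerProductSpace ℝ E] [MeasurableSpace E]
  {P : Measure E} {k : ℕ} {c : Fin k → E} {i j : Fin k}

lemma pij_eq_measureReal (hij : c i ≠ c j) (v : ℝ) :
    pij P k c i j v = P.real (voronoi k c j ∩ {x | bisectorCoord (c i) (c j) x ≤ v}) := by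
  rw [pij, ← measureReal_def, Set.inter_comm]
  congr 1
  ext x
  exact ⟨fun h => ⟨h.1, h.2.2⟩,
    fun h => ⟨h.1, bisectorCoord_nonneg_of_mem_voronoi hij h.1, h.2⟩⟩

lemma intervalIntegral_pij_eq_setIntegral [OpensMeasurableSpace E] [IsFiniteMeasure P]
    (hij : c i ≠ c j) {T : ℝ} (hT : 0 ≤ T) :
    ∫ v in (0 : ℝ)..T, pij P k c i j v =
      ∫ x in voronoi k c j, max (T - bisectorCoord (c i) (c j) x) 0 ∂P := by
  simp only [pij_eq_measureReal hij]
  exact (setIntegral_max_sub_eq_intervalIntegral_measureReal (measurableSet_voronoi c j)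
    (continuous_bisectorCoord _ _).measurable
    (fun x hx => bisectorCoord_nonneg_of_mem_voronoi hij hx) hT).symm

end Slab

end Kmeans

theorem slab_mass_integral_bounds_of_optimal_general
    (P : Measure H) [IsProbabilityMeasure P] (k : ℕ) (M : ℝ)
    (hbdd : MBounded P M)
    (cs : Fin k → H) (hcs : cs ∈ optimal P k)
    (i j : Fin k) (t : ℝ) (ht0 : 0 ≤ t) (ht : t < 1 / 2) :
    (∫ s in (0 : ℝ)..(t * ‖cs i - cs j‖), pij P k cs i j s) ≤
        2 * t ^ 2 * ‖cs i - cs j‖ *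
          min ((P (voronoi k cs i)).toReal / (1 - 2 * t))
              ((P (voronoi k cs j)).toReal / (1 + 2 * t)) ∧
    (∫ s in (0 : ℝ)..(t * ‖cs i - cs j‖), pij P k cs i j s) ≤
        t ^ 2 * ‖cs i - cs j‖ *
          ((P (voronoi k cs i)).toReal + (P (voronoi k cs j)).toReal) / 2 := by
  by_cases hij : cs i = cs j
  · simp [hij]
  have hr : 0 < ‖cs i - cs j‖ := norm_pos_iff.2 (sub_ne_zero.2 hij)
  rw [intervalIntegral_pij_eq_setIntegral hij (by positivity), ← measureReal_def,
    ← measureReal_def]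
  have key {a b : ℝ} (hab : a + b = 2 * (t * ‖cs i - cs j‖)) :=
    two_mul_mul_setIntegral_max_le_of_optimal hbdd.ae_norm_le hcs hij hab
  have hi := key (a := 2 * (t * ‖cs i - cs j‖)) (b := 0) (by ring)
  have hj := key (a := 0) (b := 2 * (t * ‖cs i - cs j‖)) (by ring)
  have hboth := key (a := t * ‖cs i - cs j‖) (b := t * ‖cs i - cs j‖) (by ring)
  refine ⟨?_, ?_⟩
  · rw [mul_min_of_nonneg _ _ (by positivity)]
    refine le_min ?_ ?_
    · rw [← mul_div_assoc, le_div_iff₀ (by linarith)]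
      nlinarith
    · rw [← mul_div_assoc, le_div_iff₀ (by linarith)]
      nlinarith
  · nlinarith

/-- necessary condition on the mass of slabs near Voronoi
boundaries of an optimal codebook. -/
theorem slab_mass_integral_bounds_of_optimal
    (P : Measure H) [IsProbabilityMeasure P] (k : ℕ) (M : ℝ)
    (hk : 1 ≤ k) (hM : 0 < M) (hbdd : MBounded P M) (hsupp : SupportMoreThan P k)
    (cs : Fin k → H) (hcs : cs ∈ optimal P k)
    (i j : Fin k) (hij : i ≠ j) (t : ℝ) (ht0 : 0 ≤ t) (ht : t < 1 / 2) :
    (∫ s in (0 : ℝ)..(t * ‖cs i - cs j‖), pij P k cs i j s) ≤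
        2 * t ^ 2 * ‖cs i - cs j‖ *
          min ((P (voronoi k cs i)).toReal / (1 - 2 * t))
              ((P (voronoi k cs j)).toReal / (1 + 2 * t)) ∧
    (∫ s in (0 : ℝ)..(t * ‖cs i - cs j‖), pij P k cs i j s) ≤
        t ^ 2 * ‖cs i - cs j‖ *
          ((P (voronoi k cs i)).toReal + (P (voronoi k cs j)).toReal) / 2 :=
  slab_mass_integral_bounds_of_optimal_general P k M hbdd cs hcs i j t ht0 ht
end
end

section
/- Assume P satisfies a margin condition with radius r_0. Then: (i) if P is ε-separated then ε ≤ B²/4; (ii) r_0 ≤ B. -/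
open MeasureTheory Metric
open scoped Classical ENNReal NNReal BigOperators RealInnerProductSpace

noncomputable section

open Kmeans

variable {H : Type*} [NormedAddCommGroup H] [InnerProductSpace ℝ H]
  [MeasurableSpace H] [BorelSpace H] [SecondCountableTopology H] [CompleteSpace H]
set_option linter.unusedSectionVars false
set_option linter.unusedVariables false
namespace KAux

open Filter Topology

variable {k : ℕ} {P : Measure H} {M r₀ : ℝ} {c : Fin k → H} {x : H}

/-- Pointwise quantization cost. -/
def qf (k : ℕ) (c : Fin k → H) (x : H) : ℝ := ⨅ j : Fin k, ‖x - c j‖ ^ 2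

lemma distortion_eq (P : Measure H) (c : Fin k → H) :
    distortion P k c = ∫ x, qf k c x ∂P := rfl

lemma qf_nonneg : 0 ≤ qf k c x := Real.iInf_nonneg fun _ => sq_nonneg _

lemma bddBelow_qf (c : Fin k → H) (x : H) :
    BddBelow (Set.range fun j => ‖x - c j‖ ^ 2) :=
  ⟨0, by rintro y ⟨j, rfl⟩; positivity⟩

lemma qf_le (j : Fin k) : qf k c x ≤ ‖x - c j‖ ^ 2 := ciInf_le (bddBelow_qf c x) j

lemma le_qf [Nonempty (Fin k)] {r : ℝ} (h : ∀ j, r ≤ ‖x - c j‖ ^ 2) :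
    r ≤ qf k c x := le_ciInf h

lemma measurable_qf (c : Fin k → H) : Measurable (qf k c) :=
  Measurable.iInf fun j =>
    (((continuous_id.sub continuous_const).norm.pow 2).measurable)

lemma mb_ae [IsProbabilityMeasure P] (hM : MBounded P M) : ∀ᵐ x ∂P, ‖x‖ ≤ M := by
  have h0 : P (closedBall (0 : H) M)ᶜ = 0 :=
    (prob_compl_eq_zero_iff measurableSet_closedBall).2 hM
  rw [ae_iff]
  convert h0 using 2
  ext x
  simp [Metric.mem_closedBall, dist_zero_right]

lemma integrable_of_bound [IsProbabilityMeasure P] {f : H → ℝ} (hf : Measurable f)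
    (C : ℝ) (h : ∀ᵐ x ∂P, |f x| ≤ C) : Integrable f P :=
  Integrable.mono' (integrable_const C) hf.aestronglyMeasurable
    (by simpa [Real.norm_eq_abs] using h)

lemma integrable_sqnorm [IsProbabilityMeasure P] (hM : MBounded P M) (a : H) :
    Integrable (fun x => ‖x - a‖ ^ 2) P := by
  refine integrable_of_bound (((continuous_id.sub continuous_const).norm.pow 2).measurable)
    ((M + ‖a‖) ^ 2) ?_
  filter_upwards [mb_ae hM] with x hx
  have h1 : ‖x - a‖ ≤ M + ‖a‖ := (norm_sub_le _ _).trans (by linarith)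
  rw [abs_of_nonneg (by positivity)]
  exact pow_le_pow_left₀ (norm_nonneg _) h1 2

lemma integrable_qf [IsProbabilityMeasure P] (hk : 0 < k) (hM : MBounded P M)
    (c : Fin k → H) : Integrable (qf k c) P := by
  haveI : Nonempty (Fin k) := Fin.pos_iff_nonempty.mp hk
  set j₀ : Fin k := Classical.arbitrary _
  refine integrable_of_bound (measurable_qf c) ((M + ‖c j₀‖) ^ 2) ?_
  filter_upwards [mb_ae hM] with x hx
  rw [abs_of_nonneg qf_nonneg]
  refine (qf_le j₀).trans ?_
  have h1 : ‖x - c j₀‖ ≤ M + ‖c j₀‖ := (norm_sub_le _ _).trans (by linarith)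
  exact pow_le_pow_left₀ (norm_nonneg _) h1 2

lemma integrable_id' [IsProbabilityMeasure P] (hM : MBounded P M) :
    Integrable (fun x : H => x) P := by
  refine Integrable.mono' (integrable_const M) measurable_id.aestronglyMeasurable ?_
  filter_upwards [mb_ae hM] with x hx using hx

lemma integrable_inner_sub [IsProbabilityMeasure P] (hM : MBounded P M) (m u : H) :
    Integrable (fun x => ⟪x - m, u⟫) P := by
  refine integrable_of_bound ?_ ((M + ‖m‖) * ‖u‖) ?_
  · exact (((continuous_id.sub continuous_const).inner continuous_const)).measurable
  · filter_upwards [mb_ae hM] with x hx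
    refine (abs_real_inner_le_norm _ _).trans ?_
    have h1 : ‖x - m‖ ≤ M + ‖m‖ := (norm_sub_le _ _).trans (by linarith)
    exact mul_le_mul_of_nonneg_right h1 (norm_nonneg _)

lemma distortion_nonneg [IsProbabilityMeasure P] (c : Fin k → H) :
    0 ≤ distortion P k c :=
  integral_nonneg fun _ => qf_nonneg

lemma isClosed_voronoi (c : Fin k → H) (j : Fin k) : IsClosed (voronoi k c j) := by
  have h : voronoi k c j = ⋂ i, {x : H | ‖x - c j‖ ≤ ‖x - c i‖} := by
    ext x; simp [voronoi, Set.mem_iInter]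
  rw [h]
  exact isClosed_iInter fun i =>
    isClosed_le (continuous_id.sub continuous_const).norm (continuous_id.sub continuous_const).norm

lemma measurableSet_voronoi (c : Fin k → H) (j : Fin k) : MeasurableSet (voronoi k c j) :=
  (isClosed_voronoi c j).measurableSet

lemma measurableSet_wcell (c : Fin k → H) (j : Fin k) : MeasurableSet (Wcell k c j) :=
  (measurableSet_voronoi c j).diff
    (MeasurableSet.iUnion fun i => MeasurableSet.iUnion fun _ => measurableSet_voronoi c i)

lemma wcell_subset (c : Fin k → H) (j : Fin k) : Wcell k c j ⊆ voronoi k c j :=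
  Set.diff_subset

lemma disjoint_wcell (c : Fin k → H) {i j : Fin k} (hij : i ≠ j) :
    Disjoint (Wcell k c i) (Wcell k c j) := by
  rcases hij.lt_or_gt with h | h
  · refine Set.disjoint_left.2 fun x hxi hxj => ?_
    exact hxj.2 (Set.mem_iUnion.2 ⟨i, Set.mem_iUnion.2 ⟨h, hxi.1⟩⟩)
  · refine Set.disjoint_left.2 fun x hxi hxj => ?_
    exact hxi.2 (Set.mem_iUnion.2 ⟨j, Set.mem_iUnion.2 ⟨h, hxj.1⟩⟩)

lemma exists_mem_voronoi (hk : 0 < k) (c : Fin k → H) (x : H) :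
    ∃ j, x ∈ voronoi k c j := by
  haveI : Nonempty (Fin k) := Fin.pos_iff_nonempty.mp hk
  obtain ⟨j₀, -, hj₀⟩ := Finset.exists_min_image Finset.univ (fun j => ‖x - c j‖)
    ⟨Classical.arbitrary _, Finset.mem_univ _⟩
  exact ⟨j₀, fun i => hj₀ i (Finset.mem_univ i)⟩

lemma iUnion_wcell (hk : 0 < k) (c : Fin k → H) : ⋃ j, Wcell k c j = Set.univ := by
  ext x
  simp only [Set.mem_iUnion, Set.mem_univ, iff_true]
  obtain ⟨j₀, hj₀⟩ := exists_mem_voronoi hk c x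
  classical
  set s : Finset (Fin k) := Finset.univ.filter fun j => x ∈ voronoi k c j with hs
  have hsne : s.Nonempty := ⟨j₀, by simp [hs, hj₀]⟩
  refine ⟨s.min' hsne, ?_, ?_⟩
  · have := s.min'_mem hsne
    simp only [hs, Finset.mem_filter] at this
    exact this.2
  · intro hx
    obtain ⟨i, hi⟩ := Set.mem_iUnion.1 hx
    obtain ⟨hlt, hmem⟩ := Set.mem_iUnion.1 hi
    have : i ∈ s := by simp [hs, hmem]
    exact absurd (s.min'_le i this) (not_le.2 hlt)

lemma qf_eq_of_mem (hx : x ∈ voronoi k c j) : qf k c x = ‖x - c j‖ ^ 2 := by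
  haveI : Nonempty (Fin k) := ⟨j⟩
  refine le_antisymm (qf_le j) (le_qf fun i => ?_)
  exact pow_le_pow_left₀ (norm_nonneg _) (hx i) 2

lemma distortion_eq_sum [IsProbabilityMeasure P] (hk : 0 < k) (hM : MBounded P M)
    (c : Fin k → H) :
    distortion P k c = ∑ j, ∫ x in Wcell k c j, ‖x - c j‖ ^ 2 ∂P := by
  rw [distortion_eq]
  have h1 : ∫ x, qf k c x ∂P = ∫ x in ⋃ j, Wcell k c j, qf k c x ∂P := by
    rw [iUnion_wcell hk c, setIntegral_univ]
  rw [h1, integral_iUnion_fintype (fun j => measurableSet_wcell c j)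
    (fun i j hij => disjoint_wcell c hij)
    (fun j => (integrable_qf hk hM c).integrableOn)]
  exact Finset.sum_congr rfl fun j _ =>
    setIntegral_congr_fun (measurableSet_wcell c j)
      (fun x hx => qf_eq_of_mem (wcell_subset c j hx))

lemma expand_sq [IsProbabilityMeasure P] (hM : MBounded P M) {W : Set H}
    (hW : MeasurableSet W) (a b : H)
    (hcent : (P W).toReal • a = ∫ x in W, x ∂P) :
    ∫ x in W, ‖x - b‖ ^ 2 ∂P = (∫ x in W, ‖x - a‖ ^ 2 ∂P) + (P W).toReal * ‖a - b‖ ^ 2 := by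
  have hkey : ∀ x : H, ‖x - b‖ ^ 2 = ‖x - a‖ ^ 2 + (2 * ⟪x - a, a - b⟫ + ‖a - b‖ ^ 2) := by
    intro x
    have h := norm_add_sq_real (x - a) (a - b)
    rw [sub_add_sub_cancel] at h
    linarith
  have hint1 : IntegrableOn (fun x => ‖x - a‖ ^ 2) W P := (integrable_sqnorm hM a).integrableOn
  have hint2 : IntegrableOn (fun x => ⟪x - a, a - b⟫) W P :=
    (integrable_inner_sub hM a (a - b)).integrableOn
  have hzero : ∫ x in W, ⟪x - a, a - b⟫ ∂P = 0 := by
    have hsw : ∀ x : H, ⟪x - a, a - b⟫ = ⟪a - b, x - a⟫ := fun x => real_inner_comm _ _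
    simp only [hsw]
    have hidW : Integrable (fun x : H => x - a) (P.restrict W) :=
      ((integrable_id' hM).integrableOn).sub (integrableOn_const)
    rw [integral_inner hidW (𝕜 := ℝ)]
    have : ∫ x in W, (x - a) ∂P = 0 := by
      rw [integral_sub ((integrable_id' hM).integrableOn)
        (integrableOn_const), setIntegral_const, measureReal_def, ← hcent]
      simp
    rw [this, inner_zero_right]
  calc ∫ x in W, ‖x - b‖ ^ 2 ∂P
      = ∫ x in W, (‖x - a‖ ^ 2 + (2 * ⟪x - a, a - b⟫ + ‖a - b‖ ^ 2)) ∂P := by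
        exact integral_congr_ae (Filter.Eventually.of_forall fun x => hkey x)
    _ = (∫ x in W, ‖x - a‖ ^ 2 ∂P)
        + ((∫ x in W, 2 * ⟪x - a, a - b⟫ ∂P) + ∫ x in W, (‖a - b‖ ^ 2 : ℝ) ∂P) := by
        have e0 : IntegrableOn (fun _ : H => (‖a - b‖ ^ 2 : ℝ)) W P :=
          integrableOn_const
        have e1 : IntegrableOn (fun x => 2 * ⟪x - a, a - b⟫ + ‖a - b‖ ^ 2) W P :=
          ((hint2.const_mul 2).add e0 : _)
        rw [integral_add hint1 e1, integral_add (hint2.const_mul 2) e0]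
    _ = (∫ x in W, ‖x - a‖ ^ 2 ∂P) + (P W).toReal * ‖a - b‖ ^ 2 := by
        rw [integral_const_mul, hzero, setIntegral_const, measureReal_def, smul_eq_mul]
        ring

lemma optimal_stationary [IsProbabilityMeasure P] (hk : 0 < k) (hM : MBounded P M)
    {c : Fin k → H} (hc : c ∈ optimal P k) : c ∈ stationary P k := by
  intro i
  by_cases hW : P (Wcell k c i) = 0
  · rw [hW, Measure.restrict_eq_zero.2 hW, integral_zero_measure]
    simp
  · by_contra hne
    set q := (P (Wcell k c i)).toReal with hq
    have hq0 : 0 < q := ENNReal.toReal_pos hW (measure_ne_top _ _)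
    set b := q⁻¹ • ∫ x in Wcell k c i, x ∂P with hb
    have hcent : (P (Wcell k c i)).toReal • b = ∫ x in Wcell k c i, x ∂P := by
      rw [hb, smul_smul, ← hq, mul_inv_cancel₀ hq0.ne', one_smul]
    have hbne : b ≠ c i := fun h => hne (by rw [← hcent, h])
    set c' := Function.update c i b with hc'
    have hterm : ∫ x in Wcell k c i, ‖x - c i‖ ^ 2 ∂P
        = (∫ x in Wcell k c i, ‖x - b‖ ^ 2 ∂P) + q * ‖b - c i‖ ^ 2 :=
      expand_sq hM (measurableSet_wcell c i) b (c i) hcent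
    have hsum' : distortion P k c' ≤ ∑ j, ∫ x in Wcell k c j, ‖x - c' j‖ ^ 2 ∂P := by
      rw [distortion_eq]
      have h1 : ∫ x, qf k c' x ∂P = ∫ x in ⋃ j, Wcell k c j, qf k c' x ∂P := by
        rw [iUnion_wcell hk c, setIntegral_univ]
      rw [h1, integral_iUnion_fintype (fun j => measurableSet_wcell c j)
        (fun i' j hij => disjoint_wcell c hij)
        (fun j => (integrable_qf hk hM c').integrableOn)]
      refine Finset.sum_le_sum fun j _ => ?_
      refine setIntegral_mono_on (integrable_qf hk hM c').integrableOn
        (integrable_sqnorm hM (c' j)).integrableOn (measurableSet_wcell c j)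
        (fun x hx => qf_le j)
    have hFG : ∀ j ∈ Finset.univ \ {i},
        (∫ x in Wcell k c j, ‖x - c' j‖ ^ 2 ∂P) = ∫ x in Wcell k c j, ‖x - c j‖ ^ 2 ∂P := by
      intro j hj
      have hji : j ≠ i := by simpa using (Finset.mem_sdiff.1 hj).2
      rw [hc', Function.update_of_ne hji]
    have hsplit : ∑ j, ∫ x in Wcell k c j, ‖x - c' j‖ ^ 2 ∂P
        = distortion P k c - q * ‖b - c i‖ ^ 2 := by
      rw [distortion_eq_sum hk hM c,
        Finset.sum_eq_sum_sdiff_singleton_add (Finset.mem_univ i)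
          (fun j => ∫ x in Wcell k c j, ‖x - c' j‖ ^ 2 ∂P),
        Finset.sum_eq_sum_sdiff_singleton_add (Finset.mem_univ i)
          (fun j => ∫ x in Wcell k c j, ‖x - c j‖ ^ 2 ∂P),
        Finset.sum_congr rfl hFG]
      have hupd : c' i = b := Function.update_self i b c
      rw [hupd, hterm]
      ring
    have hlt : distortion P k c' < distortion P k c := by
      have hpos : 0 < q * ‖b - c i‖ ^ 2 :=
        mul_pos hq0 (pow_pos (norm_pos_iff.2 (sub_ne_zero.2 hbne)) 2)
      linarith [hsum'.trans_eq hsplit]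
    exact absurd (hc c') (not_le.2 hlt)

lemma nulln [IsProbabilityMeasure P] (hmargin : MarginCondition P k M r₀)
    {c : Fin k → H} (hc : c ∈ optimal P k) :
    P {x : H | infDist x (Ncrit k c) ≤ 0} = 0 := by
  obtain ⟨hr₀, hMB, hm⟩ := hmargin
  have h0 := hm 0 le_rfl hr₀.le
  have hrhs : Bsep P k * pmin P k * 0 / (128 * M ^ 2) = 0 := by ring
  rw [hrhs] at h0
  have hbdd : BddAbove {r : ℝ | ∃ c' ∈ optimal P k,
      r = (P {x : H | infDist x (Ncrit k c') ≤ 0}).toReal} := by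
    refine ⟨1, ?_⟩
    rintro r ⟨c', -, rfl⟩
    have := measure_mono (μ := P) (Set.subset_univ {x : H | infDist x (Ncrit k c') ≤ 0})
    calc (P {x : H | infDist x (Ncrit k c') ≤ 0}).toReal
        ≤ (P Set.univ).toReal := ENNReal.toReal_mono (measure_ne_top _ _) this
      _ = 1 := by simp
  have hmem : (P {x : H | infDist x (Ncrit k c) ≤ 0}).toReal ∈
      {r : ℝ | ∃ c' ∈ optimal P k,
        r = (P {x : H | infDist x (Ncrit k c') ≤ 0}).toReal} := ⟨c, hc, rfl⟩
  have h1 : (P {x : H | infDist x (Ncrit k c) ≤ 0}).toReal ≤ 0 :=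
    (le_csSup hbdd hmem).trans h0
  have h2 : (P {x : H | infDist x (Ncrit k c) ≤ 0}).toReal = 0 :=
    le_antisymm h1 ENNReal.toReal_nonneg
  exact (ENNReal.toReal_eq_zero_iff _).1 h2 |>.resolve_right (measure_ne_top _ _)

lemma ncrit_null [IsProbabilityMeasure P] (hmargin : MarginCondition P k M r₀)
    {c : Fin k → H} (hc : c ∈ optimal P k) : P (Ncrit k c) = 0 := by
  refine measure_mono_null ?_ (nulln hmargin hc)
  intro x hx
  exact le_of_eq (infDist_zero_of_mem hx)

lemma distinct [IsProbabilityMeasure P] (hmargin : MarginCondition P k M r₀)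
    {c : Fin k → H} (hc : c ∈ optimal P k) {i j : Fin k} (hij : i ≠ j) :
    c i ≠ c j := by
  intro heq
  have hsub : (Set.univ : Set H) ⊆ Ncrit k c := by
    intro x _
    exact Set.mem_iUnion.2 ⟨i, Set.mem_iUnion.2 ⟨j, Set.mem_iUnion.2 ⟨hij, by simp [heq]⟩⟩⟩
  have h1 : P (Set.univ : Set H) = 0 :=
    measure_mono_null hsub (ncrit_null hmargin hc)
  simp only [measure_univ] at h1
  exact one_ne_zero h1

lemma voronoi_eq_wcell_ae [IsProbabilityMeasure P] (hmargin : MarginCondition P k M r₀)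
    {c : Fin k → H} (hc : c ∈ optimal P k) (j : Fin k) :
    P (voronoi k c j) = P (Wcell k c j) := by
  refine le_antisymm ?_ (measure_mono (wcell_subset c j))
  have hsplit : voronoi k c j ⊆ Wcell k c j ∪ Ncrit k c := by
    intro x hx
    by_cases hW : x ∈ Wcell k c j
    · exact Or.inl hW
    · right
      have hx2 : x ∈ ⋃ (i : Fin k) (_ : i < j), voronoi k c i := by
        by_contra hcon
        exact hW ⟨hx, hcon⟩
      obtain ⟨i, hi⟩ := Set.mem_iUnion.1 hx2
      obtain ⟨hij, hmem⟩ := Set.mem_iUnion.1 hi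
      have he : ‖x - c i‖ = ‖x - c j‖ := le_antisymm (hmem j) (hx i)
      exact Set.mem_iUnion.2 ⟨i, Set.mem_iUnion.2 ⟨j, Set.mem_iUnion.2 ⟨hij.ne, he⟩⟩⟩
  calc P (voronoi k c j) ≤ P (Wcell k c j ∪ Ncrit k c) := measure_mono hsplit
    _ ≤ P (Wcell k c j) + P (Ncrit k c) := measure_union_le _ _
    _ = P (Wcell k c j) := by rw [ncrit_null hmargin hc, add_zero]

lemma poscell [IsProbabilityMeasure P] (hk : 0 < k) (hM : MBounded P M)
    (hsupp : SupportMoreThan P k) {c : Fin k → H} (hc : c ∈ optimal P k) (j : Fin k) :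
    P (voronoi k c j) ≠ 0 := by
  haveI : Nonempty (Fin k) := Fin.pos_iff_nonempty.mp hk
  intro hPV
  obtain ⟨S, hcard, hS⟩ := hsupp
  have hout : ∃ xs ∈ S, ∀ i, c i ≠ xs := by
    by_contra hcon
    push_neg at hcon
    have hsub : S ⊆ Finset.univ.image c := by
      intro x hx
      obtain ⟨i, hi⟩ := hcon x hx
      exact Finset.mem_image.2 ⟨i, Finset.mem_univ _, hi⟩
    have h1 := Finset.card_le_card hsub
    have h2 := Finset.card_image_le (s := (Finset.univ : Finset (Fin k))) (f := c)
    simp only [Finset.card_univ, Fintype.card_fin] at h2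
    omega
  obtain ⟨xs, hxS, hxne⟩ := hout
  obtain ⟨i₀, -, hi₀⟩ := Finset.exists_min_image Finset.univ (fun i => ‖xs - c i‖)
    ⟨Classical.arbitrary _, Finset.mem_univ _⟩
  set δ := ‖xs - c i₀‖ with hδdef
  have hδ : 0 < δ := norm_pos_iff.2 (sub_ne_zero_of_ne fun h => hxne i₀ h.symm)
  set c' := Function.update c j xs with hc'
  have hball : 0 < P (ball xs (δ / 4)) := hS xs hxS _ (by positivity)
  -- pointwise inequalities off the null cell `voronoi k c j`
  have hle : ∀ x : H, x ∉ voronoi k c j → qf k c' x ≤ qf k c x := by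
    intro x hx
    obtain ⟨j', hj'⟩ := exists_mem_voronoi hk c x
    have hj'j : j' ≠ j := fun h => hx (h ▸ hj')
    rw [qf_eq_of_mem hj']
    exact (qf_le j').trans_eq (by rw [hc', Function.update_of_ne hj'j])
  have hgap : ∀ x : H, x ∉ voronoi k c j → x ∈ ball xs (δ / 4) →
      qf k c' x + δ ^ 2 / 2 ≤ qf k c x := by
    intro x hx hmem
    have hxd : ‖x - xs‖ < δ / 4 := by
      rw [← dist_eq_norm]; exact mem_ball.1 hmem
    have h1 : qf k c' x ≤ ‖x - xs‖ ^ 2 := by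
      have := qf_le (c := c') (x := x) j
      rwa [hc', Function.update_self] at this
    have h2 : (3 * δ / 4) ^ 2 ≤ qf k c x := by
      refine le_qf fun i => ?_
      have ha : δ ≤ ‖xs - c i‖ := hi₀ i (Finset.mem_univ i)
      have hb : ‖xs - c i‖ ≤ ‖xs - x‖ + ‖x - c i‖ := norm_sub_le_norm_sub_add_norm_sub _ _ _
      have hc3 : ‖xs - x‖ = ‖x - xs‖ := norm_sub_rev _ _
      have h4 : 3 * δ / 4 ≤ ‖x - c i‖ := by
        rw [hc3] at hb; linarith
      exact pow_le_pow_left₀ (by positivity) h4 2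
    have h5 : ‖x - xs‖ ^ 2 ≤ (δ / 4) ^ 2 := pow_le_pow_left₀ (norm_nonneg _) hxd.le 2
    nlinarith
  have haeV : ∀ᵐ x ∂P, x ∉ voronoi k c j := by
    rw [ae_iff]
    simpa using hPV
  set g := fun x => qf k c x - qf k c' x with hg
  have hint : Integrable g P := (integrable_qf hk hM c).sub (integrable_qf hk hM c')
  have hgnn : 0 ≤ᵐ[P] g := by
    filter_upwards [haeV] with x hx
    exact sub_nonneg.2 (hle x hx)
  set E := ball xs (δ / 4) \ voronoi k c j with hE
  have hEmeas : MeasurableSet E := measurableSet_ball.diff (measurableSet_voronoi c j)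
  have hPE : P E = P (ball xs (δ / 4)) := measure_diff_null hPV
  have hlow : δ ^ 2 / 2 * (P E).toReal ≤ ∫ x in E, g x ∂P := by
    refine setIntegral_ge_of_const_le_real hEmeas (measure_ne_top _ _) ?_ hint.integrableOn
    rintro x ⟨hx1, hx2⟩
    have := hgap x hx2 hx1
    simp only [hg]
    linarith
  have hup : ∫ x in E, g x ∂P ≤ ∫ x, g x ∂P := setIntegral_le_integral hint hgnn
  have hEpos : 0 < (P E).toReal := by
    rw [hPE]
    exact ENNReal.toReal_pos hball.ne' (measure_ne_top _ _)
  have hpos : 0 < ∫ x, g x ∂P := lt_of_lt_of_le (by positivity) (hlow.trans hup)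
  have hdiff : ∫ x, g x ∂P = distortion P k c - distortion P k c' := by
    rw [distortion_eq, distortion_eq]
    exact integral_sub (integrable_qf hk hM c) (integrable_qf hk hM c')
  rw [hdiff] at hpos
  exact absurd (hc c') (not_le.2 (by linarith))

lemma norm_centroid_le [IsProbabilityMeasure P] (hM : MBounded P M) {W : Set H}
    {a : H} (hcent : (P W).toReal • a = ∫ x in W, x ∂P)
    (hpos : 0 < (P W).toReal) : ‖a‖ ≤ M := by
  have h1 : ‖∫ x in W, x ∂P‖ ≤ M * (P W).toReal := by
    refine (norm_integral_le_integral_norm _).trans ?_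
    have h2 : ∫ x in W, ‖x‖ ∂P ≤ ∫ _x in W, M ∂P := by
      refine integral_mono_ae ((integrable_id' hM).integrableOn.norm) ?_ ?_
      · exact integrableOn_const
      · exact ae_restrict_of_ae (mb_ae hM)
    refine h2.trans ?_
    rw [setIntegral_const, measureReal_def, smul_eq_mul, mul_comm]
  rw [← hcent, norm_smul, Real.norm_eq_abs, abs_of_nonneg hpos.le] at h1
  nlinarith [h1, hpos]

def clip (M : ℝ) (b : H) : H := if ‖b‖ ≤ M then b else (M * ‖b‖⁻¹) • b

lemma norm_clip_le (hM0 : 0 ≤ M) (b : H) : ‖clip M b‖ ≤ M := by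
  unfold clip
  split_ifs with h
  · exact h
  · push_neg at h
    have hb : 0 < ‖b‖ := lt_of_le_of_lt hM0 h
    rw [norm_smul, Real.norm_eq_abs, abs_of_nonneg (by positivity), mul_assoc,
      inv_mul_cancel₀ hb.ne', mul_one]

lemma norm_sub_clip_le (hM0 : 0 ≤ M) {x : H} (hx : ‖x‖ ≤ M) (b : H) :
    ‖x - clip M b‖ ≤ ‖x - b‖ := by
  unfold clip
  split_ifs with h
  · exact le_rfl
  · push_neg at h
    have hb : 0 < ‖b‖ := lt_of_le_of_lt hM0 h
    set s : ℝ := M * ‖b‖⁻¹ with hs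
    have hs0 : 0 ≤ s := by positivity
    have hs1 : s ≤ 1 := by
      rw [hs, ← div_eq_mul_inv]
      exact (div_le_one hb).2 h.le
    have hsb : s * ‖b‖ = M := by rw [hs]; field_simp
    have hinner2 : ⟪x, b⟫ ≤ s * ‖b‖ ^ 2 := by
      have hinner : ⟪x, b⟫ ≤ M * ‖b‖ :=
        (real_inner_le_norm x b).trans (mul_le_mul_of_nonneg_right hx (norm_nonneg _))
      nlinarith [hinner, hsb]
    have hsq : ‖x - s • b‖ ^ 2 ≤ ‖x - b‖ ^ 2 := by
      rw [norm_sub_sq_real, norm_sub_sq_real, real_inner_smul_right, norm_smul,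
        Real.norm_eq_abs, abs_of_nonneg hs0]
      nlinarith [mul_le_mul_of_nonneg_left hinner2 (sub_nonneg.2 hs1),
        mul_nonneg (sq_nonneg (1 - s)) (sq_nonneg ‖b‖)]
    calc ‖x - s • b‖ = Real.sqrt (‖x - s • b‖ ^ 2) := (Real.sqrt_sq (norm_nonneg _)).symm
      _ ≤ Real.sqrt (‖x - b‖ ^ 2) := Real.sqrt_le_sqrt hsq
      _ = ‖x - b‖ := Real.sqrt_sq (norm_nonneg _)

lemma exists_weak_limit (hM0 : 0 ≤ M) (b : ℕ → Fin k → H) (hb : ∀ n j, ‖b n j‖ ≤ M) :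
    ∃ (w : Fin k → H) (φ : ℕ → ℕ), StrictMono φ ∧
      ∀ (j : Fin k) (y : H), Tendsto (fun n => ⟪b (φ n) j, y⟫) atTop (𝓝 ⟪w j, y⟫) := by
  haveI : Nonempty H := ⟨0⟩
  obtain ⟨D, hD⟩ := TopologicalSpace.exists_dense_seq H
  set T : ℕ → (Fin k × ℕ) → ℝ := fun n p => ⟪b n p.1, D p.2⟫ with hT
  have hmem : ∀ n, T n ∈ Set.univ.pi fun p : Fin k × ℕ =>
      Set.Icc (-(M * ‖D p.2‖)) (M * ‖D p.2‖) := by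
    intro n p _
    have h1 : |⟪b n p.1, D p.2⟫| ≤ M * ‖D p.2‖ :=
      (abs_real_inner_le_norm _ _).trans
        (mul_le_mul_of_nonneg_right (hb n p.1) (norm_nonneg _))
    exact abs_le.1 h1
  have hcpt : IsCompact (Set.univ.pi fun p : Fin k × ℕ =>
      Set.Icc (-(M * ‖D p.2‖)) (M * ‖D p.2‖)) :=
    isCompact_univ_pi fun p => isCompact_Icc
  obtain ⟨a, -, φ, hφ, hconv⟩ := hcpt.tendsto_subseq hmem
  have hco : ∀ p : Fin k × ℕ, Tendsto (fun n => T (φ n) p) atTop (𝓝 (a p)) :=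
    fun p => tendsto_pi_nhds.1 hconv p
  have main : ∀ j : Fin k, ∃ w : H, ∀ y : H,
      Tendsto (fun n => ⟪b (φ n) j, y⟫) atTop (𝓝 ⟪w, y⟫) := by
    intro j
    have hcauchy : ∀ y : H, CauchySeq fun n => ⟪b (φ n) j, y⟫ := by
      intro y
      rw [Metric.cauchySeq_iff]
      intro ε hε
      obtain ⟨m, hm⟩ := Metric.denseRange_iff.1 hD y (ε / (2 * (2 * M + 1))) (by positivity)
      have hc : CauchySeq fun n => T (φ n) (j, m) := (hco (j, m)).cauchySeq
      rw [Metric.cauchySeq_iff] at hc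
      obtain ⟨N, hN⟩ := hc (ε / 2) (by positivity)
      refine ⟨N, fun n1 hn1 n2 hn2 => ?_⟩
      have h1 := hN n1 hn1 n2 hn2
      rw [Real.dist_eq] at h1 ⊢
      have e1 : ⟪b (φ n1) j, y⟫ - ⟪b (φ n2) j, y⟫
          = (T (φ n1) (j, m) - T (φ n2) (j, m)) + ⟪b (φ n1) j - b (φ n2) j, y - D m⟫ := by
        simp only [hT, inner_sub_left, inner_sub_right]
        ring
      rw [e1]
      have h2 : |⟪b (φ n1) j - b (φ n2) j, y - D m⟫| ≤ (2 * M) * (ε / (2 * (2 * M + 1))) := by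
        refine (abs_real_inner_le_norm _ _).trans ?_
        refine mul_le_mul ?_ ?_ (norm_nonneg _) (by positivity)
        · exact (norm_sub_le _ _).trans (by linarith [hb (φ n1) j, hb (φ n2) j])
        · rw [← dist_eq_norm]
          exact hm.le
      have h3 : (2 * M) * (ε / (2 * (2 * M + 1))) < ε / 2 := by
        have hA : (0:ℝ) < 2 * (2 * M + 1) := by linarith
        rw [mul_div_assoc', div_lt_iff₀ hA]
        nlinarith [hε, mul_nonneg hM0 hε.le]
      calc |(T (φ n1) (j, m) - T (φ n2) (j, m)) + ⟪b (φ n1) j - b (φ n2) j, y - D m⟫|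
          ≤ |T (φ n1) (j, m) - T (φ n2) (j, m)| + |⟪b (φ n1) j - b (φ n2) j, y - D m⟫| :=
            abs_add_le _ _
        _ < ε / 2 + ε / 2 := by
            have := h2.trans_lt h3
            exact add_lt_add h1 this
        _ = ε := by ring
    choose L hL using fun y => cauchySeq_tendsto_of_complete (hcauchy y)
    have hadd : ∀ y z : H, L (y + z) = L y + L z := by
      intro y z
      refine tendsto_nhds_unique (hL (y + z)) ?_
      simpa only [inner_add_right] using (hL y).add (hL z)
    have hsmul : ∀ (r : ℝ) (y : H), L (r • y) = r * L y := by
      intro r y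
      refine tendsto_nhds_unique (hL (r • y)) ?_
      simpa only [real_inner_smul_right] using (hL y).const_mul r
    have hbound : ∀ y : H, |L y| ≤ M * ‖y‖ := by
      intro y
      have h1 : ∀ n, |⟪b (φ n) j, y⟫| ≤ M * ‖y‖ := fun n =>
        (abs_real_inner_le_norm _ _).trans
          (mul_le_mul_of_nonneg_right (hb _ _) (norm_nonneg _))
      exact le_of_tendsto (hL y).abs (Filter.Eventually.of_forall h1)
    set F : H →ₗ[ℝ] ℝ :=
      { toFun := L, map_add' := hadd, map_smul' := by intro r y; simpa using hsmul r y }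
    set F' : H →L[ℝ] ℝ := LinearMap.mkContinuous F M fun y => by
      exact (Real.norm_eq_abs _).trans_le (hbound y)
    refine ⟨(InnerProductSpace.toDual ℝ H).symm F', fun y => ?_⟩
    have he : ⟪((InnerProductSpace.toDual ℝ H).symm F' : H), y⟫ = F' y :=
      InnerProductSpace.toDual_symm_apply
    rw [he]
    exact hL y
  choose w hw using main
  exact ⟨w, φ, hφ, hw⟩

lemma exists_optimal [IsProbabilityMeasure P] (hk : 0 < k) (hM : MBounded P M)
    (hM0 : 0 ≤ M) : (optimal P k).Nonempty := by
  haveI : Nonempty (Fin k) := Fin.pos_iff_nonempty.mp hk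
  set S : Set ℝ := Set.range (distortion P k) with hSdef
  have hSne : S.Nonempty := ⟨distortion P k (fun _ => 0), ⟨fun _ => 0, rfl⟩⟩
  have hSbdd : BddBelow S := ⟨0, by rintro r ⟨c, rfl⟩; exact distortion_nonneg c⟩
  set R := sInf S with hRdef
  have hR0 : 0 ≤ R := le_csInf hSne (by rintro r ⟨c, rfl⟩; exact distortion_nonneg c)
  have hpick : ∀ n : ℕ, ∃ c : Fin k → H, distortion P k c < R + 1 / ((n : ℝ) + 1) := by
    intro n
    obtain ⟨r, ⟨c, rfl⟩, hr⟩ := exists_lt_of_csInf_lt hSne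
      (lt_add_of_pos_right R (by positivity : (0:ℝ) < 1 / ((n : ℝ) + 1)))
    exact ⟨c, hr⟩
  choose c0 hc0 using hpick
  set cs : ℕ → Fin k → H := fun n j => clip M (c0 n j) with hcs
  have hcsnorm : ∀ n j, ‖cs n j‖ ≤ M := fun n j => norm_clip_le hM0 _
  have hcsd : ∀ n, distortion P k (cs n) < R + 1 / ((n : ℝ) + 1) := by
    intro n
    refine lt_of_le_of_lt ?_ (hc0 n)
    rw [distortion_eq, distortion_eq]
    refine integral_mono_ae (integrable_qf hk hM _) (integrable_qf hk hM _) ?_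
    filter_upwards [mb_ae hM] with x hx
    exact le_qf fun j => (qf_le j).trans
      (pow_le_pow_left₀ (norm_nonneg _) (norm_sub_clip_le hM0 hx _) 2)
  obtain ⟨w, φ, hφ, hw⟩ := exists_weak_limit hM0 cs hcsnorm
  have hwR : distortion P k w ≤ R := by
    have hpt : ∀ x : H, ENNReal.ofReal (qf k w x)
        ≤ liminf (fun n => ENNReal.ofReal (qf k (cs (φ n)) x)) atTop := by
      intro x
      by_contra hLlt
      push_neg at hLlt
      obtain ⟨bnd, hb1, hb2⟩ := exists_between hLlt
      have hbtop : bnd ≠ ⊤ := (hb2.trans ENNReal.ofReal_lt_top).ne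
      have hfreq : ∃ᶠ n in atTop, ENNReal.ofReal (qf k (cs (φ n)) x) < bnd :=
        frequently_lt_of_liminf_lt (h := hb1)
      have hfreq2 : ∃ᶠ n in atTop, ∃ j : Fin k, ‖x - cs (φ n) j‖ ^ 2 < bnd.toReal := by
        refine hfreq.mono fun n hn => ?_
        obtain ⟨j₀, hj₀⟩ := exists_mem_voronoi hk (cs (φ n)) x
        refine ⟨j₀, ?_⟩
        rw [← qf_eq_of_mem hj₀]
        exact (ENNReal.ofReal_lt_iff_lt_toReal qf_nonneg hbtop).1 hn
      have hj : ∃ j₀ : Fin k, ∃ᶠ n in atTop, ‖x - cs (φ n) j₀‖ ^ 2 < bnd.toReal := by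
        by_contra hcon
        push_neg at hcon
        have hev : ∀ᶠ n in atTop, ∀ j : Fin k, ¬ (‖x - cs (φ n) j‖ ^ 2 < bnd.toReal) :=
          eventually_all.2 fun j => Filter.not_frequently.1 (by simpa using hcon j)
        exact (hfreq2.and_eventually hev).exists.elim
          fun n hn => hn.1.elim fun j hj2 => hn.2 j hj2
      obtain ⟨j₀, hj₀⟩ := hj
      obtain ⟨ψ, hψmono, hψ⟩ := Filter.extraction_of_frequently_atTop hj₀
      set v := x - w j₀ with hv
      have hlim : Tendsto (fun n => ⟪x - cs (φ (ψ n)) j₀, v⟫) atTop (𝓝 (‖v‖ ^ 2)) := by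
        have h2 : Tendsto (fun n => ⟪cs (φ (ψ n)) j₀, v⟫) atTop (𝓝 ⟪w j₀, v⟫) :=
          (hw j₀ v).comp hψmono.tendsto_atTop
        have h3 : Tendsto (fun n => ⟪x, v⟫ - ⟪cs (φ (ψ n)) j₀, v⟫) atTop
            (𝓝 (⟪x, v⟫ - ⟪w j₀, v⟫)) := tendsto_const_nhds.sub h2
        have h4 : ⟪x, v⟫ - ⟪w j₀, v⟫ = ‖v‖ ^ 2 := by
          rw [← inner_sub_left, ← hv, real_inner_self_eq_norm_sq]
        have h5 : (fun n => ⟪x - cs (φ (ψ n)) j₀, v⟫)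
            = fun n => ⟪x, v⟫ - ⟪cs (φ (ψ n)) j₀, v⟫ := by
          funext n; rw [inner_sub_left]
        rw [h5, ← h4]
        exact h3
      have hub : ∀ n, ⟪x - cs (φ (ψ n)) j₀, v⟫ ≤ Real.sqrt bnd.toReal * ‖v‖ := by
        intro n
        have h5 : ‖x - cs (φ (ψ n)) j₀‖ ^ 2 ≤ bnd.toReal := (hψ n).le
        have h4 : ‖x - cs (φ (ψ n)) j₀‖ ≤ Real.sqrt bnd.toReal := by
          calc ‖x - cs (φ (ψ n)) j₀‖ = Real.sqrt (‖x - cs (φ (ψ n)) j₀‖ ^ 2) :=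
                (Real.sqrt_sq (norm_nonneg _)).symm
            _ ≤ Real.sqrt bnd.toReal := Real.sqrt_le_sqrt h5
        exact (real_inner_le_norm _ _).trans (mul_le_mul_of_nonneg_right h4 (norm_nonneg _))
      have h5 : ‖v‖ ^ 2 ≤ Real.sqrt bnd.toReal * ‖v‖ :=
        le_of_tendsto hlim (Filter.Eventually.of_forall hub)
      have h6 : ‖v‖ ^ 2 ≤ bnd.toReal := by
        rcases eq_or_lt_of_le (norm_nonneg v) with hv0 | hv0
        · rw [← hv0]
          simpa using ENNReal.toReal_nonneg
        · have h7 : ‖v‖ ≤ Real.sqrt bnd.toReal := by nlinarith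
          calc ‖v‖ ^ 2 ≤ Real.sqrt bnd.toReal ^ 2 :=
              pow_le_pow_left₀ (norm_nonneg _) h7 2
            _ = bnd.toReal := Real.sq_sqrt ENNReal.toReal_nonneg
      have h8 : ENNReal.ofReal (qf k w x) ≤ bnd := by
        calc ENNReal.ofReal (qf k w x) ≤ ENNReal.ofReal bnd.toReal :=
            ENNReal.ofReal_le_ofReal ((qf_le j₀).trans h6)
          _ = bnd := ENNReal.ofReal_toReal hbtop
      exact absurd hb2 (not_lt.2 h8)
    have hmeasn : ∀ n, Measurable fun x => ENNReal.ofReal (qf k (cs (φ n)) x) :=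
      fun n => (measurable_qf _).ennreal_ofReal
    have hle1 : ∫⁻ x, ENNReal.ofReal (qf k w x) ∂P
        ≤ liminf (fun n => ∫⁻ x, ENNReal.ofReal (qf k (cs (φ n)) x) ∂P) atTop :=
      le_trans (lintegral_mono fun x => hpt x) (lintegral_liminf_le hmeasn)
    have heq : ∀ n, ∫⁻ x, ENNReal.ofReal (qf k (cs (φ n)) x) ∂P
        = ENNReal.ofReal (distortion P k (cs (φ n))) := by
      intro n
      rw [distortion_eq, ofReal_integral_eq_lintegral_ofReal (integrable_qf hk hM _)
        (Filter.Eventually.of_forall fun x => qf_nonneg)]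
    have hle2 : liminf (fun n => ∫⁻ x, ENNReal.ofReal (qf k (cs (φ n)) x) ∂P) atTop
        ≤ ENNReal.ofReal R := by
      have htnd : Tendsto (fun n : ℕ => ENNReal.ofReal (R + 1 / ((φ n : ℝ) + 1))) atTop
          (𝓝 (ENNReal.ofReal R)) := by
        have h1 : Tendsto (fun n : ℕ => 1 / ((φ n : ℝ) + 1)) atTop (𝓝 0) :=
          tendsto_one_div_add_atTop_nhds_zero_nat.comp hφ.tendsto_atTop
        have h2 : Tendsto (fun n : ℕ => R + 1 / ((φ n : ℝ) + 1)) atTop (𝓝 R) := by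
          simpa using tendsto_const_nhds.add h1
        exact (ENNReal.continuous_ofReal.tendsto R).comp h2
      refine le_trans (liminf_le_liminf (Filter.Eventually.of_forall fun n => ?_))
        htnd.liminf_eq.le
      rw [heq n]
      exact ENNReal.ofReal_le_ofReal (hcsd (φ n)).le
    have h9 : ENNReal.ofReal (distortion P k w) ≤ ENNReal.ofReal R := by
      rw [distortion_eq, ofReal_integral_eq_lintegral_ofReal (integrable_qf hk hM w)
        (Filter.Eventually.of_forall fun x => qf_nonneg)]
      exact hle1.trans hle2
    calc distortion P k w = (ENNReal.ofReal (distortion P k w)).toReal :=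
        (ENNReal.toReal_ofReal (distortion_nonneg w)).symm
      _ ≤ (ENNReal.ofReal R).toReal := ENNReal.toReal_mono ENNReal.ofReal_ne_top h9
      _ = R := ENNReal.toReal_ofReal hR0
  exact ⟨w, fun c' => hwR.trans (csInf_le hSbdd ⟨c', rfl⟩)⟩

lemma contra_k_one [IsProbabilityMeasure P] (hmargin : MarginCondition P k M r₀)
    (hM0 : 0 ≤ M) (hk1 : k = 1) : False := by
  subst hk1
  obtain ⟨c, hc⟩ := exists_optimal one_pos hmargin.2.1 hM0
  have hN : Ncrit 1 c = ∅ := by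
    ext x
    simp only [Ncrit, Set.mem_iUnion, Set.mem_empty_iff_false, iff_false, not_exists]
    intro i j hij
    exact absurd (Subsingleton.elim i j) hij
  have h2 := nulln hmargin hc
  have h3 : {x : H | infDist x (Ncrit 1 c) ≤ 0} = Set.univ := by
    ext x; simp [hN, infDist_empty]
  rw [h3] at h2
  simp only [measure_univ] at h2
  exact one_ne_zero h2


lemma markov_slab [IsProbabilityMeasure P] (hM : MBounded P M)
    {c : Fin k → H} {i j : Fin k} (hij : i ≠ j) (hne : c i ≠ c j)
    (hstat : (P (Wcell k c j)).toReal • c j = ∫ x in Wcell k c j, x ∂P) :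
    (P (Wcell k c j)).toReal / 2
      ≤ (P {x : H | infDist x (Ncrit k c) ≤ ‖c i - c j‖}).toReal := by
  set d := ‖c i - c j‖ with hd
  have hd0 : 0 < d := norm_pos_iff.2 (sub_ne_zero_of_ne hne)
  have hdrev : ‖c j - c i‖ = d := by rw [hd, norm_sub_rev]
  set u := d⁻¹ • (c j - c i) with hu
  set m := (2:ℝ)⁻¹ • (c i + c j) with hm
  set g := fun x : H => ⟪x - m, u⟫ with hg
  have hgmeas : Measurable g :=
    ((continuous_id.sub continuous_const).inner continuous_const).measurable
  have hiden : ∀ x : H, ‖x - c i‖ ^ 2 - ‖x - c j‖ ^ 2 = 2 * ⟪x - m, c j - c i⟫ := by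
    intro x
    have h1 : x - c i = (x - m) + (2:ℝ)⁻¹ • (c j - c i) := by rw [hm]; module
    have h2 : x - c j = (x - m) - (2:ℝ)⁻¹ • (c j - c i) := by rw [hm]; module
    rw [h1, h2, norm_add_sq_real (x - m) ((2:ℝ)⁻¹ • (c j - c i)),
      norm_sub_sq_real (x - m) ((2:ℝ)⁻¹ • (c j - c i))]
    simp only [real_inner_smul_right]
    ring
  have hgx_eq : ∀ x : H, ⟪x - m, c j - c i⟫ = d * g x := by
    intro x
    simp only [hg, hu, real_inner_smul_right]
    field_simp
  have hgnn : ∀ x ∈ voronoi k c j, 0 ≤ g x := by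
    intro x hx
    have h1 : ‖x - c j‖ ≤ ‖x - c i‖ := hx i
    have h2 : 0 ≤ ‖x - c i‖ ^ 2 - ‖x - c j‖ ^ 2 := by
      nlinarith [norm_nonneg (x - c j), norm_nonneg (x - c i)]
    rw [hiden x, hgx_eq x] at h2
    nlinarith [hd0]
  have hWmeas := measurableSet_wcell c j
  set q := (P (Wcell k c j)).toReal with hq
  have hgOnW : IntegrableOn g (Wcell k c j) P := (integrable_inner_sub hM m u).integrableOn
  have hsubint : Integrable (fun x : H => x - m) (P.restrict (Wcell k c j)) :=
    ((integrable_id' hM).integrableOn).sub (integrableOn_const)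
  have hcjm : ⟪u, c j - m⟫ = d / 2 := by
    have h1 : c j - m = (2:ℝ)⁻¹ • (c j - c i) := by rw [hm]; module
    rw [h1, hu, real_inner_smul_right, real_inner_smul_left, real_inner_self_eq_norm_sq, hdrev]
    field_simp
  have hgint : ∫ x in Wcell k c j, g x ∂P = q * (d / 2) := by
    calc ∫ x in Wcell k c j, g x ∂P = ∫ x in Wcell k c j, ⟪u, x - m⟫ ∂P := by
          refine integral_congr_ae (Filter.Eventually.of_forall fun x => ?_)
          simp only [hg]
          exact real_inner_comm _ _
      _ = ⟪u, ∫ x in Wcell k c j, (x - m) ∂P⟫ := integral_inner hsubint u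
      _ = q * (d / 2) := by
          have h2 : ∫ x in Wcell k c j, (x - m) ∂P = q • (c j - m) := by
            rw [integral_sub ((integrable_id' hM).integrableOn)
              (integrableOn_const), setIntegral_const, measureReal_def, ← hstat,
              ← smul_sub]
          rw [h2, real_inner_smul_right, hcjm]
  set Tst := Wcell k c j ∩ {x : H | d < g x} with hTst
  have hTmeas : MeasurableSet Tst := hWmeas.inter (measurableSet_lt measurable_const hgmeas)
  have hTbound : d * (P Tst).toReal ≤ q * (d / 2) := by
    have h1 : d * (P Tst).toReal = ∫ _x in Tst, d ∂P := by
      rw [setIntegral_const, measureReal_def, smul_eq_mul, mul_comm]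
    have h2 : ∫ _x in Tst, d ∂P ≤ ∫ x in Tst, g x ∂P := by
      refine setIntegral_mono_on (integrableOn_const)
        (hgOnW.mono_set Set.inter_subset_left) hTmeas fun x hx => ?_
      exact hx.2.le
    have h3 : ∫ x in Tst, g x ∂P ≤ ∫ x in Wcell k c j, g x ∂P := by
      refine setIntegral_mono_set hgOnW ?_ (HasSubset.Subset.eventuallyLE Set.inter_subset_left)
      exact (ae_restrict_iff' hWmeas).2 (Filter.Eventually.of_forall
        fun x hx => hgnn x (wcell_subset c j hx))
    linarith [hgint]
  have hPT : (P Tst).toReal ≤ q / 2 := by nlinarith [hd0, ENNReal.toReal_nonneg (a := P Tst)]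
  set Sl := Wcell k c j ∩ {x : H | g x ≤ d} with hSl
  have hcover : Wcell k c j ⊆ Sl ∪ Tst := by
    intro x hx
    by_cases hgx : g x ≤ d
    · exact Or.inl ⟨hx, hgx⟩
    · exact Or.inr ⟨hx, not_le.1 hgx⟩
  have hsplit : q ≤ (P Sl).toReal + (P Tst).toReal := by
    have h1 : P (Wcell k c j) ≤ P Sl + P Tst :=
      le_trans (measure_mono hcover) (measure_union_le _ _)
    calc q ≤ (P Sl + P Tst).toReal :=
        ENNReal.toReal_mono (ENNReal.add_ne_top.2 ⟨measure_ne_top _ _, measure_ne_top _ _⟩) h1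
      _ = (P Sl).toReal + (P Tst).toReal :=
        ENNReal.toReal_add (measure_ne_top _ _) (measure_ne_top _ _)
  have hSsub : Sl ⊆ {x : H | infDist x (Ncrit k c) ≤ d} := by
    rintro x ⟨hxW, hxg⟩
    have hgx0 : 0 ≤ g x := hgnn x (wcell_subset c j hxW)
    set y := x - g x • u with hy
    have hyN : y ∈ Ncrit k c := by
      have h2 : ⟪u, c j - c i⟫ = d := by
        rw [hu, real_inner_smul_left, real_inner_self_eq_norm_sq, hdrev]
        field_simp
      have hinner0 : ⟪y - m, c j - c i⟫ = 0 := by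
        have h3 : y - m = (x - m) - g x • u := by rw [hy]; module
        rw [h3, inner_sub_left, real_inner_smul_left, hgx_eq x, h2]
        ring
      have h4 : ‖y - c i‖ ^ 2 - ‖y - c j‖ ^ 2 = 0 := by
        rw [hiden y, hinner0]
        ring
      have hnorm : ‖y - c i‖ = ‖y - c j‖ := by
        have h5 : ‖y - c i‖ ^ 2 = ‖y - c j‖ ^ 2 := by linarith
        calc ‖y - c i‖ = Real.sqrt (‖y - c i‖ ^ 2) := (Real.sqrt_sq (norm_nonneg _)).symm
          _ = Real.sqrt (‖y - c j‖ ^ 2) := by rw [h5]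
          _ = ‖y - c j‖ := Real.sqrt_sq (norm_nonneg _)
      exact Set.mem_iUnion.2 ⟨i, Set.mem_iUnion.2 ⟨j, Set.mem_iUnion.2 ⟨hij, hnorm⟩⟩⟩
    have hunorm : ‖u‖ = 1 := by
      rw [hu, norm_smul, Real.norm_eq_abs, abs_of_pos (inv_pos.2 hd0), hdrev]
      field_simp
    have hdist : dist x y = g x := by
      rw [dist_eq_norm, hy]
      have h6 : x - (x - g x • u) = g x • u := by module
      rw [h6, norm_smul, Real.norm_eq_abs, abs_of_nonneg hgx0, hunorm, mul_one]
    have h7 : infDist x (Ncrit k c) ≤ d :=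
      le_trans (infDist_le_dist_of_mem hyN) (by rw [hdist]; exact hxg)
    exact h7
  have hfinal : (P Sl).toReal ≤ (P {x : H | infDist x (Ncrit k c) ≤ d}).toReal :=
    ENNReal.toReal_mono (measure_ne_top _ _) (measure_mono hSsub)
  linarith [hsplit, hPT, hfinal]

end KAux

set_option maxHeartbeats 1000000 in
/-- relations between the separation factor `ε`, the minimal
separation `B` and the margin radius `r₀`. -/
theorem separation_le_Bsq_div_four_and_radius_le_B
    (P : Measure H) [IsProbabilityMeasure P] (k : ℕ) (M r₀ : ℝ)
    (hk : 1 ≤ k) (hM : 0 < M) (hsupp : SupportMoreThan P k)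
    (hmargin : MarginCondition P k M r₀) :
    (∀ ε : ℝ, 0 < ε → Separated P k ε → ε ≤ Bsep P k ^ 2 / 4) ∧
    r₀ ≤ Bsep P k := by
  classical
  obtain ⟨hr₀, hMB, hmarg⟩ := id hmargin
  have hM0 : (0:ℝ) ≤ M := hM.le
  have hk0 : 0 < k := hk
  obtain ⟨copt, hcopt⟩ := KAux.exists_optimal hk0 hMB hM0
  constructor
  · -- part (i)
    intro ε hε hsep
    rcases eq_or_lt_of_le hk with hk1 | hk2
    · exact (KAux.contra_k_one hmargin hM0 hk1.symm).elim
    · obtain ⟨n, rfl⟩ : ∃ n, k = n + 2 := ⟨k - 2, by omega⟩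
      have hi01 : (⟨0, by omega⟩ : Fin (n+2)) ≠ (⟨1, by omega⟩ : Fin (n+2)) := by
        intro h
        simpa using congrArg Fin.val h
      have hSne : {r : ℝ | ∃ c ∈ optimal P (n+2), ∃ i j : Fin (n+2), i ≠ j ∧ r = ‖c i - c j‖}.Nonempty :=
        ⟨‖copt ⟨0, by omega⟩ - copt ⟨1, by omega⟩‖, copt, hcopt, _, _, hi01, rfl⟩
      have hBlow : BddBelow {r : ℝ | ∃ c ∈ optimal P (n+2), ∃ i j : Fin (n+2), i ≠ j ∧ r = ‖c i - c j‖} :=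
        ⟨0, by rintro r ⟨c, -, i, j, -, rfl⟩; exact norm_nonneg _⟩
      have hB0 : 0 ≤ Bsep P (n+2) :=
        le_csInf hSne (by rintro r ⟨c, -, i, j, -, rfl⟩; exact norm_nonneg _)
      -- the (n+1)-point optimal codebook, extended by duplication
      obtain ⟨cb, hcb⟩ := KAux.exists_optimal (P := P) (k := n+1) n.succ_pos hMB hM0
      have hstatb := KAux.optimal_stationary n.succ_pos hMB hcb
      set proj : Fin (n+2) → Fin (n+1) :=
        fun i => if h : (i : ℕ) < n + 1 then ⟨i, h⟩ else ⟨n, n.lt_succ_self⟩ with hproj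
      set w : Fin (n+2) → H := fun i => cb (proj i) with hwdef
      have hprojlt : ∀ (i : Fin (n+2)) (h : (i : ℕ) < n + 1), proj i = ⟨(i : ℕ), h⟩ :=
        fun i h => dif_pos h
      have hprojge : ∀ (i : Fin (n+2)), ¬ ((i : ℕ) < n + 1) → proj i = ⟨n, n.lt_succ_self⟩ :=
        fun i h => dif_neg h
      have hwcast : ∀ ℓ : Fin (n+1), w ⟨(ℓ : ℕ), by omega⟩ = cb ℓ := by
        intro ℓ
        show cb (proj ⟨(ℓ : ℕ), by omega⟩) = cb ℓ
        rw [hprojlt _ (by exact ℓ.isLt)]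
      have hqfeq : ∀ x : H, KAux.qf (n+2) w x = KAux.qf (n+1) cb x := by
        intro x
        apply le_antisymm
        · refine le_ciInf fun ℓ => ?_
          calc KAux.qf (n+2) w x ≤ ‖x - w ⟨(ℓ : ℕ), by omega⟩‖ ^ 2 :=
              KAux.qf_le (c := w) (x := x) _
            _ = ‖x - cb ℓ‖ ^ 2 := by rw [hwcast ℓ]
        · refine le_ciInf fun i => ?_
          exact KAux.qf_le (c := cb) (x := x) (proj i)
      have hdist_eq : distortion P (n+2) w = distortion P (n+1) cb := by
        rw [KAux.distortion_eq, KAux.distortion_eq]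
        exact integral_congr_ae (Filter.Eventually.of_forall fun x => hqfeq x)
      have hvor : ∀ i : Fin (n+2), voronoi (n+2) w i = voronoi (n+1) cb (proj i) := by
        intro i
        ext x
        constructor
        · intro hx ℓ
          have h1 := hx ⟨(ℓ : ℕ), by omega⟩
          rwa [hwcast ℓ] at h1
        · intro hx ℓ
          exact hx (proj ℓ)
      have hwstat : w ∈ stationary P (n+2) := by
        intro i
        by_cases hi : (i : ℕ) < n + 1
        · have hUnion : (⋃ (i' : Fin (n+2)) (_ : i' < i), voronoi (n+2) w i')
              = ⋃ (ℓ : Fin (n+1)) (_ : ℓ < proj i), voronoi (n+1) cb ℓ := by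
            ext x
            simp only [Set.mem_iUnion]
            constructor
            · rintro ⟨i', hi', hx⟩
              refine ⟨proj i', ?_, ?_⟩
              · rw [Fin.lt_def] at hi' ⊢
                rw [hprojlt i' (by omega), hprojlt i hi]
                exact hi'
              · rwa [hvor i'] at hx
            · rintro ⟨ℓ, hℓ, hx⟩
              have hplt : proj ⟨(ℓ : ℕ), by omega⟩ = ℓ := by
                rw [hprojlt _ (by exact ℓ.isLt)]
              refine ⟨⟨(ℓ : ℕ), by omega⟩, ?_, ?_⟩
              · rw [Fin.lt_def] at hℓ ⊢
                rw [hprojlt i hi] at hℓ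
                exact hℓ
              · rw [hvor, hplt]
                exact hx
          have hWeq : Wcell (n+2) w i = Wcell (n+1) cb (proj i) := by
            show voronoi (n+2) w i \ _ = voronoi (n+1) cb (proj i) \ _
            rw [hvor i, hUnion]
          rw [hWeq]
          exact hstatb (proj i)
        · have hival : (i : ℕ) = n + 1 := by omega
          have hvn : voronoi (n+2) w ⟨n, by omega⟩ = voronoi (n+1) cb ⟨n, n.lt_succ_self⟩ := by
            rw [hvor]
            congr 1
            rw [hprojlt _ (n.lt_succ_self)]
          have hvi : voronoi (n+2) w i = voronoi (n+1) cb ⟨n, n.lt_succ_self⟩ := by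
            rw [hvor, hprojge i hi]
          have hWempty : Wcell (n+2) w i = ∅ := by
            ext x
            simp only [Wcell, Set.mem_diff, Set.mem_empty_iff_false, iff_false, not_and,
              not_not]
            intro hx
            refine Set.mem_iUnion.2 ⟨⟨n, by omega⟩, Set.mem_iUnion.2 ⟨?_, ?_⟩⟩
            · rw [Fin.lt_def]
              simp [hival]
            · rw [hvn, ← hvi]
              exact hx
          rw [hWempty]
          simp
      have hwnopt : w ∉ optimal P (n+2) := by
        intro hopt
        have hne2 : (⟨n, by omega⟩ : Fin (n+2)) ≠ ⟨n+1, by omega⟩ := by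
          intro h
          simpa using congrArg Fin.val h
        refine KAux.distinct hmargin hopt hne2 ?_
        show cb (proj ⟨n, by omega⟩) = cb (proj ⟨n+1, by omega⟩)
        rw [hprojlt _ (n.lt_succ_self), hprojge _ (lt_irrefl _)]
      have hstep : ε ≤ distortion P (n+2) w - distortion P (n+2) copt :=
        hsep w ⟨hwstat, hwnopt⟩ copt hcopt
      -- upper bound via merging for every η > 0
      have hkey : ∀ η : ℝ, 0 < η → ε ≤ (Bsep P (n+2) + η) ^ 2 / 4 := by
        intro η hη
        obtain ⟨r, hrmem, hrlt⟩ := exists_lt_of_csInf_lt hSne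
          (lt_add_of_pos_right _ hη)
        obtain ⟨c, hcO, i, j, hij, rfl⟩ := hrmem
        have hstatc := KAux.optimal_stationary (by omega) hMB hcO
        have hVW_j := KAux.voronoi_eq_wcell_ae hmargin hcO j
        have hVW_i := KAux.voronoi_eq_wcell_ae hmargin hcO i
        have hqj : 0 < (P (Wcell (n+2) c j)).toReal :=
          ENNReal.toReal_pos (by rw [← hVW_j]; exact KAux.poscell (by omega) hMB hsupp hcO j)
            (measure_ne_top _ _)
        have hqi : 0 < (P (Wcell (n+2) c i)).toReal :=
          ENNReal.toReal_pos (by rw [← hVW_i]; exact KAux.poscell (by omega) hMB hsupp hcO i)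
            (measure_ne_top _ _)
        set qi := (P (Wcell (n+2) c i)).toReal with hqidef
        set qj := (P (Wcell (n+2) c j)).toReal with hqjdef
        set s := qi + qj with hsdef
        have hs0 : 0 < s := by positivity
        set d := ‖c i - c j‖ with hddef
        set chat := s⁻¹ • (qi • c i + qj • c j) with hchatdef
        have hsum_ne : qi + qj ≠ 0 := by positivity
        have hci : c i - chat = (qj / s) • (c i - c j) := by
          rw [hchatdef, hsdef]
          match_scalars <;> (field_simp [hsum_ne]; try ring)
        have hcj : c j - chat = (qi / s) • (c j - c i) := by
          rw [hchatdef, hsdef]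
          match_scalars <;> (field_simp [hsum_ne]; try ring)
        have hnci : ‖c i - chat‖ = (qj / s) * d := by
          rw [hci, norm_smul, Real.norm_eq_abs, abs_of_nonneg (by positivity), hddef]
        have hncj : ‖c j - chat‖ = (qi / s) * d := by
          rw [hcj, norm_smul, Real.norm_eq_abs, abs_of_nonneg (by positivity), norm_sub_rev,
            hddef]
        set cm : Fin (n+1) → H :=
          fun ℓ => if j.succAbove ℓ = i then chat else c (j.succAbove ℓ) with hcmdef
        have hpoint : ∀ (mm : Fin (n+2)) (x : H),
            KAux.qf (n+1) cm x ≤ ‖x - (if mm = i ∨ mm = j then chat else c mm)‖ ^ 2 := by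
          intro mm x
          by_cases hmm : mm = i ∨ mm = j
          · rw [if_pos hmm]
            obtain ⟨ℓ, hℓ⟩ := Fin.exists_succAbove_eq hij
            have hv : cm ℓ = chat := by
              simp only [hcmdef]
              rw [if_pos hℓ]
            calc KAux.qf (n+1) cm x ≤ ‖x - cm ℓ‖ ^ 2 := KAux.qf_le (c := cm) (x := x) ℓ
              _ = ‖x - chat‖ ^ 2 := by rw [hv]
          · push_neg at hmm
            rw [if_neg (by tauto)]
            obtain ⟨ℓ, hℓ⟩ := Fin.exists_succAbove_eq hmm.2
            have hv : cm ℓ = c mm := by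
              simp only [hcmdef]
              rw [if_neg (by rw [hℓ]; exact hmm.1), hℓ]
            calc KAux.qf (n+1) cm x ≤ ‖x - cm ℓ‖ ^ 2 := KAux.qf_le (c := cm) (x := x) ℓ
              _ = ‖x - c mm‖ ^ 2 := by rw [hv]
        have hcmle : distortion P (n+1) cm ≤
            ∑ mm : Fin (n+2), ∫ x in Wcell (n+2) c mm,
              ‖x - (if mm = i ∨ mm = j then chat else c mm)‖ ^ 2 ∂P := by
          rw [KAux.distortion_eq]
          have h1 : ∫ x, KAux.qf (n+1) cm x ∂P
              = ∫ x in ⋃ mm, Wcell (n+2) c mm, KAux.qf (n+1) cm x ∂P := by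
            rw [KAux.iUnion_wcell (by omega) c, setIntegral_univ]
          rw [h1, integral_iUnion_fintype (fun mm => KAux.measurableSet_wcell c mm)
            (fun a b hab => KAux.disjoint_wcell c hab)
            (fun mm => (KAux.integrable_qf n.succ_pos hMB cm).integrableOn)]
          refine Finset.sum_le_sum fun mm _ => ?_
          exact setIntegral_mono_on (KAux.integrable_qf n.succ_pos hMB cm).integrableOn
            (KAux.integrable_sqnorm hMB _).integrableOn (KAux.measurableSet_wcell c mm)
            (fun x _ => hpoint mm x)
        have hexpand_i : (∫ x in Wcell (n+2) c i, ‖x - chat‖ ^ 2 ∂P)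
            = (∫ x in Wcell (n+2) c i, ‖x - c i‖ ^ 2 ∂P) + qi * ‖c i - chat‖ ^ 2 :=
          KAux.expand_sq hMB (KAux.measurableSet_wcell c i) (c i) chat (hstatc i)
        have hexpand_j : (∫ x in Wcell (n+2) c j, ‖x - chat‖ ^ 2 ∂P)
            = (∫ x in Wcell (n+2) c j, ‖x - c j‖ ^ 2 ∂P) + qj * ‖c j - chat‖ ^ 2 :=
          KAux.expand_sq hMB (KAux.measurableSet_wcell c j) (c j) chat (hstatc j)
        set F : Fin (n+2) → ℝ := fun mm => ∫ x in Wcell (n+2) c mm,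
          ‖x - (if mm = i ∨ mm = j then chat else c mm)‖ ^ 2 ∂P with hFdef
        set G : Fin (n+2) → ℝ := fun mm => ∫ x in Wcell (n+2) c mm, ‖x - c mm‖ ^ 2 ∂P
          with hGdef
        have hFi : F i = G i + qi * ‖c i - chat‖ ^ 2 := by
          simp only [hFdef, hGdef, true_or, or_true, if_true]
          exact hexpand_i
        have hFj : F j = G j + qj * ‖c j - chat‖ ^ 2 := by
          simp only [hFdef, hGdef, true_or, or_true, if_true]
          exact hexpand_j
        have hFG : ∀ mm, mm ∉ ({i, j} : Finset (Fin (n+2))) → F mm = G mm := by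
          intro mm hmm
          simp only [Finset.mem_insert, Finset.mem_singleton] at hmm
          push_neg at hmm
          simp only [hFdef, hGdef]
          rw [if_neg (by tauto)]
        have hsum : ∑ mm : Fin (n+2), F mm
            = distortion P (n+2) c + (qi * ‖c i - chat‖ ^ 2 + qj * ‖c j - chat‖ ^ 2) := by
          have e1 : ∑ mm : Fin (n+2), F mm
              = ∑ mm : Fin (n+2), G mm + ∑ mm : Fin (n+2), (F mm - G mm) := by
            rw [← Finset.sum_add_distrib]
            exact Finset.sum_congr rfl fun mm _ => by ring
          have e2 : ∑ mm : Fin (n+2), (F mm - G mm)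
              = ∑ mm ∈ ({i, j} : Finset (Fin (n+2))), (F mm - G mm) := by
            refine (Finset.sum_subset (Finset.subset_univ _) ?_).symm
            intro mm _ hmm
            rw [hFG mm hmm]
            ring
          have e3 : ∑ mm ∈ ({i, j} : Finset (Fin (n+2))), (F mm - G mm)
              = qi * ‖c i - chat‖ ^ 2 + qj * ‖c j - chat‖ ^ 2 := by
            rw [Finset.sum_pair hij, hFi, hFj]
            ring
          rw [e1, e2, e3, ← KAux.distortion_eq_sum (by omega) hMB c]
        have hpen : qi * ‖c i - chat‖ ^ 2 + qj * ‖c j - chat‖ ^ 2 ≤ d ^ 2 / 4 := by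
          rw [hnci, hncj]
          have hs1 : s ≤ 1 := by
            have h2 : P (Wcell (n+2) c i ∪ Wcell (n+2) c j)
                = P (Wcell (n+2) c i) + P (Wcell (n+2) c j) :=
              measure_union (KAux.disjoint_wcell c hij) (KAux.measurableSet_wcell c j)
            calc s = (P (Wcell (n+2) c i ∪ Wcell (n+2) c j)).toReal := by
                  rw [h2, ENNReal.toReal_add (measure_ne_top _ _) (measure_ne_top _ _)]
              _ ≤ (P Set.univ).toReal :=
                  ENNReal.toReal_mono (measure_ne_top _ _) (measure_mono (Set.subset_univ _))
              _ = 1 := by simp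
          have key : qi * (qj / s * d) ^ 2 + qj * (qi / s * d) ^ 2 = (qi * qj / s) * d ^ 2 := by
            field_simp
            ring
          rw [key]
          have h4 : qi * qj / s ≤ s / 4 := by
            rw [div_le_div_iff₀ hs0 (by norm_num)]
            nlinarith [sq_nonneg (qi - qj)]
          have h5 : (qi * qj / s) * d ^ 2 ≤ (s / 4) * d ^ 2 :=
            mul_le_mul_of_nonneg_right h4 (sq_nonneg d)
          nlinarith [sq_nonneg d, hs1, h5]
        have hcb_le : distortion P (n+1) cb ≤ distortion P (n+1) cm := hcb cm
        have hco_eq : distortion P (n+2) c = distortion P (n+2) copt :=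
          le_antisymm (hcO copt) (hcopt c)
        have hfin : ε ≤ d ^ 2 / 4 := by
          rw [hdist_eq] at hstep
          linarith [hcmle, hsum, hpen, hcb_le, hco_eq, hstep]
        have hd0 : (0:ℝ) ≤ d := norm_nonneg _
        have hBη : d ≤ Bsep P (n+2) + η := hrlt.le
        nlinarith [hfin, hd0, hBη, hB0, hη]
      -- conclude
      by_contra hcon
      push_neg at hcon
      have hεB : Bsep P (n+2) ^ 2 / 4 < ε := hcon
      set B := Bsep P (n+2) with hBdef
      set η := min 1 ((4 * ε - B ^ 2) / (2 * B + 2)) with hηdef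
      have hη0 : 0 < η :=
        lt_min one_pos (div_pos (by linarith) (by linarith))
      have h1 : η ≤ (4 * ε - B ^ 2) / (2 * B + 2) := min_le_right _ _
      have h2 : η ≤ 1 := min_le_left _ _
      have h3 := hkey η hη0
      have h5 : η * (2 * B + 2) ≤ 4 * ε - B ^ 2 := (le_div_iff₀ (by linarith)).1 h1
      have h6 : η ^ 2 ≤ η := by nlinarith [hη0, h2]
      have h4 : (B + η) ^ 2 < 4 * ε := by nlinarith [h5, h6, hη0, hB0]
      linarith [h3, h4]

  · -- part (ii)
    by_contra hB
    push_neg at hB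
    rcases eq_or_lt_of_le hk with hk1 | hk2
    · exact KAux.contra_k_one hmargin hM0 hk1.symm
    · have hi01 : (⟨0, by omega⟩ : Fin k) ≠ (⟨1, by omega⟩ : Fin k) := by
        intro h
        simpa using congrArg Fin.val h
      have hSne : {r : ℝ | ∃ c ∈ optimal P k, ∃ i j : Fin k, i ≠ j ∧ r = ‖c i - c j‖}.Nonempty :=
        ⟨‖copt ⟨0, by omega⟩ - copt ⟨1, by omega⟩‖, copt, hcopt, _, _, hi01, rfl⟩
      have hBlow : BddBelow {r : ℝ | ∃ c ∈ optimal P k, ∃ i j : Fin k, i ≠ j ∧ r = ‖c i - c j‖} :=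
        ⟨0, by rintro r ⟨c, -, i, j, -, rfl⟩; exact norm_nonneg _⟩
      obtain ⟨r, hrmem, hrlt⟩ := exists_lt_of_csInf_lt hSne hB
      obtain ⟨c, hcO, i, j, hij, rfl⟩ := hrmem
      have hcne : c i ≠ c j := KAux.distinct hmargin hcO hij
      have hstat := KAux.optimal_stationary hk0 hMB hcO
      have hVW_j := KAux.voronoi_eq_wcell_ae hmargin hcO j
      have hVW_i := KAux.voronoi_eq_wcell_ae hmargin hcO i
      have hqj : 0 < (P (Wcell k c j)).toReal :=
        ENNReal.toReal_pos (by rw [← hVW_j]; exact KAux.poscell hk0 hMB hsupp hcO j)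
          (measure_ne_top _ _)
      have hqi : 0 < (P (Wcell k c i)).toReal :=
        ENNReal.toReal_pos (by rw [← hVW_i]; exact KAux.poscell hk0 hMB hsupp hcO i)
          (measure_ne_top _ _)
      have hni : ‖c i‖ ≤ M := KAux.norm_centroid_le hMB (hstat i) hqi
      have hnj : ‖c j‖ ≤ M := KAux.norm_centroid_le hMB (hstat j) hqj
      have hd2M : ‖c i - c j‖ ≤ 2 * M := (norm_sub_le _ _).trans (by linarith)
      have hslab := KAux.markov_slab hMB hij hcne (hstat j)
      set d := ‖c i - c j‖ with hd
      have hbddA : BddAbove {r : ℝ | ∃ c' ∈ optimal P k,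
          r = (P {x : H | infDist x (Ncrit k c') ≤ d}).toReal} := by
        refine ⟨1, ?_⟩
        rintro r ⟨c', -, rfl⟩
        calc (P {x : H | infDist x (Ncrit k c') ≤ d}).toReal
            ≤ (P Set.univ).toReal :=
              ENNReal.toReal_mono (measure_ne_top _ _) (measure_mono (Set.subset_univ _))
          _ = 1 := by simp
      have hpw : (P {x : H | infDist x (Ncrit k c) ≤ d}).toReal ≤ pweight P k d :=
        le_csSup hbddA ⟨c, hcO, rfl⟩
      have hmain := hmarg d (norm_nonneg _) hrlt.le
      have hpminb : BddBelow {r : ℝ | ∃ c' ∈ optimal P k, ∃ j' : Fin k,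
          r = (P (voronoi k c' j')).toReal} :=
        ⟨0, by rintro r ⟨_, -, _, rfl⟩; exact ENNReal.toReal_nonneg⟩
      have hpmin_le : pmin P k ≤ (P (Wcell k c j)).toReal := by
        have h1 : pmin P k ≤ (P (voronoi k c j)).toReal := csInf_le hpminb ⟨c, hcO, j, rfl⟩
        rwa [hVW_j] at h1
      have hpmin0 : 0 ≤ pmin P k :=
        le_csInf ⟨_, ⟨c, hcO, j, rfl⟩⟩ (by rintro r ⟨_, -, _, rfl⟩; exact ENNReal.toReal_nonneg)
      have hBle : Bsep P k ≤ d := csInf_le hBlow ⟨c, hcO, i, j, hij, rfl⟩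
      have hchain : (P (Wcell k c j)).toReal / 2 ≤ Bsep P k * pmin P k * d / (128 * M ^ 2) :=
        le_trans hslab (le_trans hpw hmain)
      have hpos128 : (0:ℝ) < 128 * M ^ 2 := by positivity
      have hchain2 : (P (Wcell k c j)).toReal / 2 * (128 * M ^ 2) ≤ Bsep P k * pmin P k * d :=
        (le_div_iff₀ hpos128).1 hchain
      have hup : Bsep P k * pmin P k * d ≤ d * (P (Wcell k c j)).toReal * d := by
        have e1 : Bsep P k * pmin P k ≤ d * (P (Wcell k c j)).toReal :=
          mul_le_mul hBle hpmin_le hpmin0 (norm_nonneg _)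
        exact mul_le_mul_of_nonneg_right e1 (norm_nonneg _)
      have hd2 : d * (P (Wcell k c j)).toReal * d ≤ (2 * M) * (P (Wcell k c j)).toReal * (2 * M) := by
        have hdn : (0:ℝ) ≤ d := norm_nonneg _
        nlinarith [mul_nonneg (mul_nonneg (sub_nonneg.2 hd2M) hqj.le)
          (by linarith : (0:ℝ) ≤ 2 * M + d)]
      set q := (P (Wcell k c j)).toReal with hqdef
      have e1 : (64:ℝ) * (M ^ 2 * q) = q / 2 * (128 * M ^ 2) := by ring
      have e2 : (2 * M) * q * (2 * M) = 4 * (M ^ 2 * q) := by ring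
      have e3 : 0 < M ^ 2 * q := by positivity
      linarith [hchain2, hup, hd2, e1, e2, e3]
end
end
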